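/- arXiv:math/0311418 — 7 statements merged into one kernel-verified Lean document; each statement's English description precedes it below -/
import Mathlib

section
/- Let λ be a strict partition, let o be the number of odd parts of λ and e the number of even parts of λ. Then every bar tableau of shape λ has at least max(o, e + (ℓ(λ) mod 2)) bars. -/
/-- A strict partition of `n`: a strictly decreasing list of positive integers summing to `n`. -/
def IsStrictPartition (n : ℕ) (l : List ℕ) : Prop :=
  l.Pairwise (· > ·) ∧ (∀ x ∈ l, 0 < x) ∧ l.sum = n

/-- A bar tableau of shape `l` (a strict partition), presented as the list of rows of labels:
(0) the row lengths are exactly the parts of `l` and all labels are positive;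
(1) entries weakly increase along each row;
(2) every label that appears does so in an odd total number of cells;
(3) every label appears in at most two rows, and if it appears in two rows then it begins
    (is a prefix of) both rows;
(4) for every `i`, the nonzero row lengths remaining after deleting all cells labelled `> i`
    are pairwise distinct. -/
def IsBarTableau (l : List ℕ) (T : List (List ℕ)) : Prop :=
  T.map List.length = l ∧
  (∀ row ∈ T, ∀ x ∈ row, 0 < x) ∧
  (∀ row ∈ T, row.Chain' (· ≤ ·)) ∧
  (∀ v ∈ T.flatten, Odd (T.flatten.count v)) ∧
  (∀ v : ℕ, T.countP (fun row => decide (v ∈ row)) ≤ 2) ∧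
  (∀ v : ℕ, T.countP (fun row => decide (v ∈ row)) = 2 →
      ∀ row ∈ T, v ∈ row → row.head? = some v) ∧
  (∀ i : ℕ,
    (((T.map (fun row => row.filter (fun x => decide (x ≤ i)))).map List.length).filter
        (fun k => decide (k ≠ 0))).Nodup)

/-- The number of bars of a tableau: the number of distinct labels used. -/
def numBars (T : List (List ℕ)) : ℕ := T.flatten.dedup.length

/-!
Delete the bar carrying the largest label `m`. Since rows weakly increase, that bar is either
a final segment of odd length of a single row, which flips the parity of that row's length, or,
if it meets two rows, it is a prefix of both and hence fills both, their lengths having odd sum.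
Neither move can lower the number of odd rows, or the number of nonempty even rows plus the
parity of the number of nonempty rows, by more than one, and both quantities vanish once every
bar is gone.
-/

-- Rows emptied by deleting bars stay in the tableau as parts `0`, hence the `x ≠ 0`.
def barBound (L : List ℕ) : ℕ :=
  max (L.countP (fun x => decide (Odd x)))
    (L.countP (fun x => decide (Even x ∧ x ≠ 0)) + L.countP (fun x => decide (x ≠ 0)) % 2)

theorem barBound_perm {L L' : List ℕ} (h : L.Perm L') : barBound L = barBound L' := by
  simp only [barBound, h.countP_eq]

theorem barBound_cons_le {a a' : ℕ} (L : List ℕ) (ha : a' ≤ a) (hodd : Odd (a - a')) :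
    barBound (a :: L) ≤ barBound (a' :: L) + 1 := by
  simp only [barBound, List.countP_cons, Nat.odd_iff, Nat.even_iff, decide_eq_true_eq] at *
  split_ifs <;> omega

theorem barBound_cons_cons_le {a b : ℕ} (L : List ℕ) (hodd : Odd (a + b)) :
    barBound (a :: b :: L) ≤ barBound (0 :: 0 :: L) + 1 := by
  simp only [barBound, List.countP_cons, Nat.odd_iff, Nat.even_iff, decide_eq_true_eq] at *
  split_ifs <;> omega

theorem barBound_eq_zero_of_forall_eq_zero {L : List ℕ} (h : ∀ x ∈ L, x = 0) :
    barBound L = 0 := by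
  have hL : L = List.replicate L.length 0 := List.eq_replicate_iff.mpr ⟨rfl, h⟩
  rw [hL]
  simp [barBound, List.countP_replicate]

theorem barBound_eq_of_forall_pos {L : List ℕ} (h : ∀ x ∈ L, 0 < x) :
    barBound L = max (L.countP (fun x => decide (Odd x)))
      (L.countP (fun x => decide (Even x)) + L.length % 2) := by
  have hne : ∀ x ∈ L, x ≠ 0 := fun x hx => (h x hx).ne'
  rw [barBound, ← List.countP_eq_length.mpr (fun x hx => decide_eq_true (hne x hx))]
  congr 2
  exact List.countP_congr fun x hx => by simp [hne x hx]

-- Conditions (1)–(3) of `IsBarTableau`, for rows of any lengths.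
structure IsBarRows (T : List (List ℕ)) : Prop where
  chain : ∀ row ∈ T, row.IsChain (· ≤ ·)
  odd_count : ∀ v ∈ T.flatten, Odd (T.flatten.count v)
  countP_mem_le_two : ∀ v : ℕ, T.countP (fun row => decide (v ∈ row)) ≤ 2
  head?_eq_of_countP_mem_eq_two : ∀ v : ℕ, T.countP (fun row => decide (v ∈ row)) = 2 →
    ∀ row ∈ T, v ∈ row → row.head? = some v

theorem IsBarTableau.isBarRows {l : List ℕ} {T : List (List ℕ)} (h : IsBarTableau l T) :
    IsBarRows T :=
  ⟨h.2.2.1, h.2.2.2.1, h.2.2.2.2.1, h.2.2.2.2.2.1⟩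

def truncate (m : ℕ) (T : List (List ℕ)) : List (List ℕ) :=
  T.map (List.filter (fun x => decide (x < m)))

section Truncate

variable {m : ℕ} {T : List (List ℕ)}

theorem flatten_truncate : (truncate m T).flatten = T.flatten.filter (fun x => decide (x < m)) :=
  List.filter_flatten.symm

theorem countP_mem_truncate {v : ℕ} (hv : v < m) :
    (truncate m T).countP (fun row => decide (v ∈ row)) =
      T.countP (fun row => decide (v ∈ row)) := by
  rw [truncate, List.countP_map]
  exact List.countP_congr fun r _ => by simp [hv]

theorem countP_mem_truncate_of_le {v : ℕ} (hv : m ≤ v) :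
    (truncate m T).countP (fun row => decide (v ∈ row)) = 0 := by
  rw [truncate, List.countP_map]
  exact List.countP_eq_zero.mpr fun r _ => by simp; omega

theorem IsBarRows.truncate (hT : IsBarRows T) : IsBarRows (truncate m T) where
  chain := by
    simp only [_root_.truncate, List.mem_map]
    rintro _ ⟨r, hr, rfl⟩
    exact (hT.chain r hr).sublist List.filter_sublist
  odd_count v hv := by
    rw [flatten_truncate] at hv ⊢
    rw [List.count_filter (List.of_mem_filter hv)]
    exact hT.odd_count v (List.mem_of_mem_filter hv)
  countP_mem_le_two v := by
    rcases lt_or_ge v m with hv | hv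
    · exact (countP_mem_truncate hv).le.trans (hT.countP_mem_le_two v)
    · simp [countP_mem_truncate_of_le hv]
  head?_eq_of_countP_mem_eq_two v h2 := by
    have hv : v < m := by
      by_contra! hv
      simp [countP_mem_truncate_of_le hv] at h2
    simp only [_root_.truncate, List.mem_map]
    rintro _ ⟨r, hr, rfl⟩ hvr
    have hhead := hT.head?_eq_of_countP_mem_eq_two v ((countP_mem_truncate hv).symm.trans h2) r hr
      (List.mem_of_mem_filter hvr)
    obtain ⟨t, rfl⟩ := List.head?_eq_some_iff.mp hhead
    simp [hv]

theorem numBars_truncate_add_one (hm : m ∈ T.flatten) (hmax : ∀ x ∈ T.flatten, x ≤ m) :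
    numBars (truncate m T) + 1 = numBars T := by
  have herase : (truncate m T).flatten.toFinset = T.flatten.toFinset.erase m := by
    ext x
    simp only [flatten_truncate, List.mem_toFinset, List.mem_filter, Finset.mem_erase,
      decide_eq_true_eq]
    constructor
    · rintro ⟨hx, hxm⟩
      exact ⟨hxm.ne, hx⟩
    · rintro ⟨hxm, hx⟩
      exact ⟨hx, lt_of_le_of_ne (hmax x hx) hxm⟩
  rw [numBars, numBars, ← List.card_toFinset, ← List.card_toFinset, herase,
    Finset.card_erase_add_one (List.mem_toFinset.mpr hm)]

end Truncate

theorem length_filter_lt_add_count {m : ℕ} {r : List ℕ} (h : ∀ x ∈ r, x ≤ m) :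
    (r.filter (fun x => decide (x < m))).length + r.count m = r.length := by
  rw [← List.countP_eq_length_filter, List.count, List.length_eq_countP_add_countP
    (fun x => decide (x < m))]
  congr 1
  exact List.countP_congr fun x hx => by have := h x hx; simp; omega

theorem eq_of_head?_eq_of_le {m : ℕ} {r : List ℕ} (hc : r.IsChain (· ≤ ·))
    (hh : r.head? = some m) (hle : ∀ x ∈ r, x ≤ m) : ∀ x ∈ r, x = m := by
  obtain ⟨t, rfl⟩ := List.head?_eq_some_iff.mp hh
  intro x hx
  rcases List.mem_cons.mp hx with rfl | hx
  · rfl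
  · exact le_antisymm (hle x (List.mem_cons_of_mem _ hx))
      ((List.pairwise_cons.mp (List.isChain_iff_pairwise.mp hc)).1 x hx)

theorem count_flatten_eq_sum_filter_mem (m : ℕ) (T : List (List ℕ)) :
    T.flatten.count m = ((T.filter (fun row => decide (m ∈ row))).map (List.count m)).sum := by
  rw [List.count_flatten, ← List.sum_map_filter_add_sum_map_filter_not
    (fun row => decide (m ∈ row))]
  simp only [decide_eq_true_eq]
  refine add_eq_left.mpr (List.sum_eq_zero fun c hc => ?_)
  obtain ⟨r, hr, rfl⟩ := List.mem_map.mp hc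
  exact List.count_eq_zero.mpr (by simpa using (List.mem_filter.mp hr).2)

theorem exists_map_length_perm_filter_mem {m : ℕ} {T : List (List ℕ)}
    (hmax : ∀ x ∈ T.flatten, x ≤ m) :
    ∃ L, (T.map List.length).Perm ((T.filter (fun row => decide (m ∈ row))).map List.length ++ L) ∧
      ((truncate m T).map List.length).Perm
        ((truncate m (T.filter (fun row => decide (m ∈ row)))).map List.length ++ L) := by
  set S := T.filter (fun row => !decide (m ∈ row))
  have hperm := (List.filter_append_perm (fun row => decide (m ∈ row)) T).symm
  have hS : truncate m S = S := by
    refine (List.map_congr_left fun r hr => List.filter_eq_self.mpr fun x hx => ?_).trans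
      (List.map_id S)
    obtain ⟨hrT, hmr⟩ := List.mem_filter.mp hr
    have hxm : x ≠ m := by rintro rfl; simp_all
    simpa using lt_of_le_of_ne (hmax x (List.mem_flatten.mpr ⟨r, hrT, hx⟩)) hxm
  refine ⟨S.map List.length, by simpa using hperm.map List.length, ?_⟩
  have := (hperm.map (List.filter (fun x => decide (x < m)))).map List.length
  rw [List.map_append, ← truncate, ← truncate, ← truncate, hS] at this
  rwa [List.map_append] at this

theorem barBound_le_barBound_truncate_add_one {m : ℕ} {T : List (List ℕ)} (hT : IsBarRows T)
    (hm : m ∈ T.flatten) (hmax : ∀ x ∈ T.flatten, x ≤ m) :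
    barBound (T.map List.length) ≤ barBound ((truncate m T).map List.length) + 1 := by
  have hle : ∀ r ∈ T, ∀ x ∈ r, x ≤ m := fun r hr x hx =>
    hmax x (List.mem_flatten.mpr ⟨r, hr, hx⟩)
  have hodd := hT.odd_count m hm
  rw [count_flatten_eq_sum_filter_mem] at hodd
  obtain ⟨L, hperm, hperm'⟩ := exists_map_length_perm_filter_mem hmax
  rw [barBound_perm hperm, barBound_perm hperm']
  set R := T.filter (fun row => decide (m ∈ row))
  have hR : R.length = T.countP (fun row => decide (m ∈ row)) :=
    List.countP_eq_length_filter.symm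
  have hR1 : 0 < R.length := by
    obtain ⟨r, hr, hmr⟩ := List.mem_flatten.mp hm
    exact hR ▸ List.countP_pos_iff.mpr ⟨r, hr, by simpa using hmr⟩
  obtain h1 | h2 : R.length = 1 ∨ R.length = 2 := by have := hT.countP_mem_le_two m; omega
  · obtain ⟨a, ha⟩ := List.length_eq_one_iff.mp h1
    have haT : a ∈ T := List.mem_of_mem_filter (ha ▸ List.mem_singleton_self a)
    have := length_filter_lt_add_count (hle a haT)
    simp only [ha, truncate, List.map_cons, List.map_nil, List.sum_cons, List.sum_nil, add_zero,
      List.cons_append, List.nil_append] at hodd ⊢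
    refine barBound_cons_le _ (by omega) ?_
    rwa [show a.length - _ = a.count m by omega]
  · have hfill : ∀ r ∈ R,
        r.filter (fun x => decide (x < m)) = [] ∧ r.count m = r.length := by
      intro r hr
      obtain ⟨hrT, hmr⟩ := List.mem_filter.mp hr
      have hall := eq_of_head?_eq_of_le (hT.chain r hrT)
        (hT.head?_eq_of_countP_mem_eq_two m (hR ▸ h2) r hrT (by simpa using hmr)) (hle r hrT)
      exact ⟨List.filter_eq_nil_iff.mpr fun x hx => by simp [hall x hx],
        List.count_eq_length.mpr fun x hx => (hall x hx).symm⟩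
    obtain ⟨a, b, hab⟩ := List.length_eq_two.mp h2
    obtain ⟨ha0, ha⟩ := hfill a (by simp [hab])
    obtain ⟨hb0, hb⟩ := hfill b (by simp [hab])
    simp only [hab, truncate, List.map_cons, List.map_nil, List.sum_cons, List.sum_nil, add_zero,
      ha0, hb0, ha, hb, List.length_nil, List.cons_append, List.nil_append] at hodd ⊢
    exact barBound_cons_cons_le _ hodd

theorem barBound_le_numBars {T : List (List ℕ)} (hT : IsBarRows T) :
    barBound (T.map List.length) ≤ numBars T := by
  induction hn : numBars T generalizing T with
  | zero =>
    have hF : T.flatten = [] := (List.dedup_eq_nil _).mp (List.length_eq_zero_iff.mp hn)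
    refine (barBound_eq_zero_of_forall_eq_zero ?_).le
    simp only [List.mem_map]
    rintro _ ⟨r, hr, rfl⟩
    simp [List.flatten_eq_nil_iff.mp hF r hr]
  | succ n ih =>
    obtain ⟨m, hm, hmax⟩ : ∃ m ∈ T.flatten, ∀ x ∈ T.flatten, x ≤ m := by
      obtain ⟨m, hm⟩ := Option.ne_none_iff_exists'.mp
        ((List.max?_eq_none_iff (xs := T.flatten)).not.mpr fun hF => by simp [numBars, hF] at hn)
      exact ⟨m, List.max?_eq_some_iff.mp hm⟩
    have hstep := barBound_le_barBound_truncate_add_one hT hm hmax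
    have hbars := numBars_truncate_add_one hm hmax
    have := ih (hT.truncate (m := m)) (by omega)
    omega

/-- Every bar tableau of shape `λ` has at least `max(o, e + (ℓ(λ) mod 2))` bars. -/
theorem numBars_ge (n : ℕ) (l : List ℕ) (h : IsStrictPartition n l)
    (T : List (List ℕ)) (hT : IsBarTableau l T) :
    max (l.countP (fun x => decide (Odd x)))
      (l.countP (fun x => decide (Even x)) + l.length % 2) ≤ numBars T := by
  rw [← barBound_eq_of_forall_pos h.2.1, ← hT.1]
  exact barBound_le_numBars hT.isBarRows
end

section
/- For every strict partition λ, there exists a minimal bar tableau T* of shape λ (i.e., a bar tableau of shape λ with the minimum possible number of bars) such that no bar boundary occurs an even number of squares along any row of T*. -/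
/-- A bar boundary occurs an even number of squares along a row: for some even `k > 0`,
the first `k` cells of the row all carry labels strictly smaller than the `(k+1)`-st cell. -/
def HasEvenBoundary (row : List ℕ) : Prop :=
  ∃ k : ℕ, 0 < k ∧ Even k ∧ k < row.length ∧ ∀ c ∈ row.take k, c < row.getD k 0

/-!
A bar tableau has at least `max o e` bars, where `o` and `e` count the odd and even parts: two
rows of equal parity cannot end in the same label `v`, since `v` would then occupy exactly these
two rows, both would start with `v` and hence be constant, and `v` would occur an even number of
times. Moreover every bar has odd size, so the number of bars has the parity of `n`, hence of `o`.

This bound is attained with rows of the form `a b^m`, which never have a bar boundary after an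
even number of cells. The `i`-th odd part and the `i`-th even part share one bar `c^p, c^q`, and
leftover odd parts get a bar each. The remaining even parts `p, q, …` take the smallest labels,
as `c^p, c (c+1)^(q-1)`: the bar `c` has `p + 1` cells and the bar `c + 1` has `q - 1`. Only the
rows `c (c+1)^(q-1)` are ever cut strictly inside, to length 1, while all rows that are complete
at such a threshold have even length.
-/

namespace MinimalBarTableau

open List

theorem isChain_cons_replicate {α : Type*} [Preorder α] {a b : α} (m : ℕ) (hab : a ≤ b) :
    (a :: replicate m b).IsChain (· ≤ ·) :=
  isChain_iff_pairwise.mpr <| pairwise_cons.mpr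
    ⟨fun _ hx => (eq_of_mem_replicate hx).symm ▸ hab, pairwise_replicate.mpr (Or.inr le_rfl)⟩

theorem eq_replicate_of_isChain {α : Type*} [PartialOrder α] {row : List α} {v : α}
    (hchain : row.IsChain (· ≤ ·)) (hhead : row.head? = some v) (hlast : row.getLast? = some v) :
    row = replicate row.length v := by
  have hpw := isChain_iff_pairwise.mp hchain
  refine eq_replicate_iff.mpr ⟨rfl, fun b hb => le_antisymm ?_ ?_⟩
  · obtain ⟨ys, rfl⟩ := getLast?_eq_some_iff.mp hlast
    rcases mem_append.mp hb with hb | hb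
    · exact pairwise_append.mp hpw |>.2.2 b hb v (mem_singleton_self v)
    · exact (mem_singleton.mp hb).le
  · obtain ⟨ys, rfl⟩ := head?_eq_some_iff.mp hhead
    rcases mem_cons.mp hb with rfl | hb
    · exact le_rfl
    · exact pairwise_cons.mp hpw |>.1 b hb

theorem count_flatten_filter_mem {α : Type*} [DecidableEq α] (T : List (List α)) (v : α) :
    (T.filter (fun row => decide (v ∈ row))).flatten.count v = T.flatten.count v := by
  induction T with
  | nil => rfl
  | cons row T ih => by_cases h : v ∈ row <;> simp [h, ih, count_eq_zero_of_not_mem]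

theorem sum_map_mod_two {α : Type*} {L : List α} {f : α → ℕ} (h : ∀ x ∈ L, f x % 2 = 1) :
    (L.map f).sum % 2 = L.length % 2 := by
  induction L with
  | nil => rfl
  | cons a L ih =>
    have := h a mem_cons_self
    have := ih fun x hx => h x (mem_cons_of_mem a hx)
    simp only [map_cons, sum_cons, length_cons]
    omega

theorem exists_perm_map_eq {α β : Type*} {f : α → β} {L : List α} {l : List β}
    (h : l ~ L.map f) : ∃ L', L' ~ L ∧ L'.map f = l := by
  obtain ⟨L', hl, hL⟩ := Eq.mpr (congrFun₂ (eq_map_comp_perm f) l L) h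
  exact ⟨L', hL, hl.symm⟩

theorem length_filter_cons_replicate {a b : ℕ} (t m : ℕ) (hab : a ≤ b) :
    ((a :: replicate m b).filter (fun x => decide (x ≤ t))).length =
      if b ≤ t then m + 1 else if a ≤ t then 1 else 0 := by
  simp only [filter_cons, filter_replicate, decide_eq_true_eq]
  split_ifs <;> simp; omega

theorem not_hasEvenBoundary_cons_replicate (a b m : ℕ) :
    ¬ HasEvenBoundary (a :: replicate m b) := by
  rintro ⟨k, hk, ⟨j, rfl⟩, hlt, hcut⟩
  obtain ⟨i, rfl⟩ : ∃ i, j = i + 1 := ⟨j - 1, by omega⟩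
  simp only [length_cons, length_replicate] at hlt
  have hb : b ∈ (a :: replicate m b).take (i + 1 + (i + 1)) := by
    rw [show i + 1 + (i + 1) = (2 * i + 1) + 1 by omega, take_succ_cons]
    exact mem_cons_of_mem a (by simp [take_replicate]; omega)
  have := hcut b hb
  rw [show i + 1 + (i + 1) = (2 * i + 1) + 1 by omega, getD_cons_succ,
    getD_eq_getElem _ _ (by simp; omega), getElem_replicate] at this
  exact lt_irrefl b this

theorem numBars_perm {T T' : List (List ℕ)} (hT : T ~ T') : numBars T = numBars T' :=
  hT.flatten.dedup.length_eq

theorem numBars_le {T : List (List ℕ)} {N : ℕ}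
    (h : ∀ row ∈ T, ∀ x ∈ row, 1 ≤ x ∧ x ≤ N) : numBars T ≤ N := by
  have hsub : T.flatten.dedup ⊆ range' 1 N := fun x hx => by
    obtain ⟨row, hrow, hx⟩ := mem_flatten.mp (mem_dedup.mp hx)
    have := h row hrow x hx
    rw [mem_range'_1]
    omega
  simpa [numBars] using ((nodup_dedup _).subperm hsub).length_le

def BarCondition (T : List (List ℕ)) (v : ℕ) : Prop :=
  (v ∈ T.flatten → Odd (T.flatten.count v)) ∧
  T.countP (fun row => decide (v ∈ row)) ≤ 2 ∧
  (T.countP (fun row => decide (v ∈ row)) = 2 → ∀ row ∈ T, v ∈ row → row.head? = some v)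

section BarCondition

variable {T T' A B : List (List ℕ)} {v : ℕ}

theorem BarCondition.perm (hv : BarCondition T v) (hT : T ~ T') : BarCondition T' v := by
  have hflat := hT.flatten
  simp only [BarCondition, ← hflat.mem_iff, ← hflat.count_eq, ← hT.countP_eq] at hv ⊢
  exact ⟨hv.1, hv.2.1, fun h2 row hrow => hv.2.2 h2 row (hT.mem_iff.mpr hrow)⟩

theorem barCondition_of_forall_not_mem (h : ∀ row ∈ T, v ∉ row) : BarCondition T v := by
  have hzero : T.countP (fun row => decide (v ∈ row)) = 0 :=
    countP_eq_zero.mpr fun row hrow => by simpa using h row hrow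
  refine ⟨fun hmem => ?_, by omega, by omega⟩
  obtain ⟨row, hrow, hv⟩ := mem_flatten.mp hmem
  exact absurd hv (h row hrow)

theorem BarCondition.append_of_forall_not_mem (hA : BarCondition A v)
    (hB : ∀ row ∈ B, v ∉ row) : BarCondition (A ++ B) v := by
  have hcount : B.flatten.count v = 0 :=
    count_eq_zero.mpr fun hmem => by
      obtain ⟨row, hrow, hv⟩ := mem_flatten.mp hmem
      exact hB row hrow hv
  have hcountP : B.countP (fun row => decide (v ∈ row)) = 0 :=
    countP_eq_zero.mpr fun row hrow => by simpa using hB row hrow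
  obtain ⟨hodd, hle, hhead⟩ := hA
  refine ⟨fun hmem => ?_, ?_, fun h2 row hrow hv => ?_⟩
  · rw [flatten_append, count_append, hcount, add_zero]
    rw [flatten_append, mem_append] at hmem
    exact hodd (hmem.resolve_right (count_eq_zero.mp hcount))
  · rwa [countP_append, hcountP, add_zero]
  · rw [countP_append, hcountP, add_zero] at h2
    rcases mem_append.mp hrow with hrow | hrow
    · exact hhead h2 row hrow hv
    · exact absurd hv (hB row hrow)

theorem barCondition_append (hA : ∀ v, BarCondition A v) (hB : ∀ v, BarCondition B v)
    (hdisj : ∀ ra ∈ A, ∀ rb ∈ B, ∀ v ∈ ra, v ∉ rb) (v : ℕ) :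
    BarCondition (A ++ B) v := by
  by_cases hv : ∀ rb ∈ B, v ∉ rb
  · exact (hA v).append_of_forall_not_mem hv
  · push Not at hv
    obtain ⟨rb, hrb, hv⟩ := hv
    exact ((hB v).append_of_forall_not_mem fun ra hra hva => hdisj ra hra rb hrb v hva hv).perm
      perm_append_comm

theorem barCondition_singleton {row : List ℕ} (h : v ∈ row → Odd (row.count v)) :
    BarCondition [row] v := by
  refine ⟨by simpa using h, ?_, ?_⟩ <;> simp only [countP_singleton] <;> split <;> simp

theorem barCondition_pair {r s : List ℕ}
    (hodd : v ∈ r ∨ v ∈ s → Odd (r.count v + s.count v))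
    (hhead : v ∈ r → v ∈ s → r.head? = some v ∧ s.head? = some v) :
    BarCondition [r, s] v := by
  refine ⟨by simpa using hodd, ?_, fun h2 row hrow hv => ?_⟩
  · simp only [countP_cons, countP_nil]; split <;> split <;> omega
  · simp only [countP_cons, countP_nil] at h2
    have hr : v ∈ r := by by_contra h; simp [h] at h2; split at h2 <;> omega
    have hs : v ∈ s := by by_contra h; simp [h] at h2; split at h2 <;> omega
    simp only [mem_cons, not_mem_nil, or_false] at hrow
    rcases hrow with rfl | rfl
    exacts [(hhead hr hs).1, (hhead hr hs).2]

end BarCondition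

def cutLengths (t : ℕ) (T : List (List ℕ)) : List ℕ :=
  ((T.map (fun row => row.filter (fun x => decide (x ≤ t)))).map List.length).filter
    (fun k => decide (k ≠ 0))

section CutLengths

variable {t : ℕ} {T T' A B : List (List ℕ)}

@[simp]
theorem cutLengths_append : cutLengths t (A ++ B) = cutLengths t A ++ cutLengths t B := by
  simp [cutLengths]

theorem cutLengths_perm (hT : T ~ T') : cutLengths t T ~ cutLengths t T' :=
  ((hT.map _).map _).filter _

theorem cutLengths_eq_nil (h : ∀ row ∈ T, ∀ x ∈ row, t < x) : cutLengths t T = [] := by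
  simp only [cutLengths, filter_eq_nil_iff, mem_map]
  rintro _ ⟨_, ⟨row, hrow, rfl⟩, rfl⟩
  simpa [filter_eq_nil_iff] using fun x hx => h row hrow x hx

theorem cutLengths_sublist (h : ∀ row ∈ T, (∀ x ∈ row, x ≤ t) ∨ ∀ x ∈ row, t < x) :
    cutLengths t T <+ T.map length := by
  induction T with
  | nil => simp [cutLengths]
  | cons row T ih =>
    have ih := ih fun r hr => h r (mem_cons_of_mem row hr)
    rcases h row mem_cons_self with hle | hlt
    · have hrow : row.filter (fun x => decide (x ≤ t)) = row := filter_eq_self.mpr (by simpa)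
      simp only [cutLengths, map_cons, hrow, filter_cons] at ih ⊢
      split
      · exact ih.cons_cons _
      · exact ih.cons _
    · have hrow : row.filter (fun x => decide (x ≤ t)) = [] :=
        filter_eq_nil_iff.mpr (by simpa using hlt)
      simp only [cutLengths, map_cons, hrow, filter_cons] at ih ⊢
      simpa using ih.cons _

theorem nodup_cutLengths (hT : (T.map length).Nodup)
    (h : ∀ row ∈ T, (∀ x ∈ row, x ≤ t) ∨ ∀ x ∈ row, t < x) :
    (cutLengths t T).Nodup :=
  hT.sublist (cutLengths_sublist h)

end CutLengths

def chainRows : ℕ → List ℕ → List (List ℕ)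
  | _, [] => []
  | c, [q] => [c :: replicate (q - 1) (c + 1)]
  | c, p :: q :: qs => replicate p c :: (c :: replicate (q - 1) (c + 1)) :: chainRows (c + 2) qs

section ChainRows

theorem bounds_of_mem_chainRows {c : ℕ} {qs : List ℕ} :
    ∀ row ∈ chainRows c qs, ∀ x ∈ row, c ≤ x ∧ x < c + 2 * ((qs.length + 1) / 2) := by
  fun_induction chainRows c qs with
  | case1 => simp
  | case2 c q =>
    intro row hrow x hx
    simp only [mem_singleton] at hrow
    subst hrow
    simp only [mem_cons, mem_replicate] at hx
    simp only [length_singleton]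
    omega
  | case3 c p q qs ih =>
    intro row hrow x hx
    simp only [mem_cons] at hrow
    rcases hrow with rfl | rfl | hrow
    · simp at hx; simp; omega
    · simp at hx; simp; omega
    · have := ih row hrow x hx; simp; omega

variable {c : ℕ} {qs : List ℕ}

theorem exists_cons_replicate_of_mem_chainRows (hpos : ∀ q ∈ qs, 0 < q) :
    ∀ row ∈ chainRows c qs, ∃ a b m, a ≤ b ∧ row = a :: replicate m b := by
  fun_induction chainRows c qs with
  | case1 => simp
  | case2 c q => exact fun row hrow => ⟨c, c + 1, q - 1, by omega, mem_singleton.mp hrow⟩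
  | case3 c p q qs ih =>
    obtain ⟨m, rfl⟩ := Nat.exists_eq_add_one.mpr (hpos p (by simp))
    intro row hrow
    simp only [mem_cons] at hrow
    rcases hrow with rfl | rfl | hrow
    · exact ⟨c, c, m, le_rfl, rfl⟩
    · exact ⟨c, c + 1, q - 1, by omega, rfl⟩
    · exact ih (fun q hq => hpos q (by simp [hq])) row hrow

theorem map_length_chainRows (hpos : ∀ q ∈ qs, 0 < q) : (chainRows c qs).map length = qs := by
  fun_induction chainRows c qs with
  | case1 => rfl
  | case2 c q => have := hpos q (by simp); simp; omega
  | case3 c p q qs ih =>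
    have := hpos q (by simp)
    simp only [map_cons, length_replicate, length_cons, ih fun q hq => hpos q (by simp [hq])]
    congr 2; omega

theorem barCondition_chainRows (heven : ∀ q ∈ qs, q % 2 = 0) (v : ℕ) :
    BarCondition (chainRows c qs) v := by
  fun_induction chainRows c qs generalizing v with
  | case1 => exact barCondition_of_forall_not_mem (by simp)
  | case2 c q =>
    refine barCondition_singleton fun hv => ?_
    simp only [mem_cons, mem_replicate] at hv
    have := heven q (by simp)
    rcases hv with rfl | ⟨hq, rfl⟩
    · simp [count_replicate]
    · simp [Nat.odd_iff]; omega
  | case3 c p q qs ih =>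
    have hp := heven p (by simp)
    have hq := heven q (by simp)
    refine barCondition_append (A := [_, _]) (fun v => barCondition_pair ?_ ?_)
      (ih fun q hq => heven q (by simp [hq])) ?_ v
    · intro hv
      simp only [mem_cons, mem_replicate] at hv
      rcases hv with ⟨-, rfl⟩ | rfl | ⟨hq0, rfl⟩ <;>
        simp [count_replicate, Nat.odd_iff] <;> omega
    · intro hv _
      obtain ⟨hp0, rfl⟩ := mem_replicate.mp hv
      simp [head?_replicate]; omega
    · intro ra hra rb hrb x hxa hxb
      have := bounds_of_mem_chainRows rb hrb x hxb
      simp only [mem_cons, not_mem_nil, or_false] at hra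
      rcases hra with rfl | rfl <;> simp at hxa <;> omega

theorem nodup_cutLengths_chainRows (hnodup : qs.Nodup) (heven : ∀ q ∈ qs, q % 2 = 0)
    (hpos : ∀ q ∈ qs, 0 < q) (t : ℕ) :
    (cutLengths t (chainRows c qs)).Nodup ∧
      ∀ m ∈ cutLengths t (chainRows c qs), m = 1 ∨ m ∈ qs := by
  fun_induction chainRows c qs with
  | case1 => simp [cutLengths]
  | case2 c q =>
    simp only [cutLengths, map_singleton, length_filter_cons_replicate t _ (Nat.le_succ c)]
    split_ifs <;> simp; omega
  | case3 c p q qs ih =>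
    have hp := heven p (by simp)
    have hp0 := hpos p (by simp)
    have hq := heven q (by simp)
    have hq0 := hpos q (by simp)
    have hpq : p ≠ q := by intro h; simp [h] at hnodup
    have hblock : ∀ T, cutLengths t (replicate p c :: (c :: replicate (q - 1) (c + 1)) :: T) =
        (if t < c then [] else [p, if t = c then 1 else q]) ++ cutLengths t T := by
      intro T
      have hq1 : q - 1 + 1 = q := by omega
      rcases lt_trichotomy t c with ht | rfl | ht
      · simp [cutLengths, ht, Nat.not_le.mpr ht, show ¬ c + 1 ≤ t by omega]
      · simp [cutLengths, hp0.ne']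
      · simp [cutLengths, ht.le, ht.ne', Nat.not_lt.mpr ht.le, show c + 1 ≤ t by omega, hq1,
          hp0.ne', hq0.ne']
    rw [hblock]
    by_cases ht : t < c + 2
    · rw [cutLengths_eq_nil fun row hrow x hx => by
        have := bounds_of_mem_chainRows row hrow x hx; omega]
      split_ifs <;> simp <;> omega
    · obtain ⟨ihnd, ihmem⟩ := ih (nodup_cons.mp (nodup_cons.mp hnodup).2).2
        (fun q hq => heven q (by simp [hq])) (fun q hq => hpos q (by simp [hq]))
      rw [if_neg (by omega), if_neg (by omega)]
      simp only [nodup_cons, mem_cons, not_or] at hnodup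
      have hnot : ∀ x ∈ [p, q], x ∉ cutLengths t (chainRows (c + 2) qs) := by
        intro x hx hmem
        simp only [mem_cons, not_mem_nil, or_false] at hx
        rcases ihmem x hmem with h | h <;> rcases hx with rfl | rfl <;> simp_all
      refine ⟨nodup_append.mpr ⟨by simpa using hpq, ihnd, ?_⟩, ?_⟩
      · exact fun x hx y hy hxy => hnot x hx (hxy ▸ hy)
      · intro m hm
        rcases mem_append.mp hm with hm | hm
        · simp only [mem_cons, not_mem_nil, or_false] at hm; rcases hm with rfl | rfl <;> simp
        · rcases ihmem m hm with h | h <;> simp [h]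

end ChainRows

def pairRows : ℕ → List ℕ → List ℕ → List (List ℕ)
  | _, [], _ => []
  | c, p :: ps, [] => replicate p c :: pairRows (c + 1) ps []
  | c, p :: ps, q :: qs => replicate p c :: replicate q c :: pairRows (c + 1) ps qs

section PairRows

variable {c : ℕ} {ps qs : List ℕ}

theorem bounds_of_mem_pairRows :
    ∀ row ∈ pairRows c ps qs, ∀ x ∈ row, c ≤ x ∧ x < c + ps.length := by
  fun_induction pairRows c ps qs with
  | case1 => simp
  | case2 c p ps ih =>
    intro row hrow x hx
    rcases mem_cons.mp hrow with rfl | hrow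
    · rw [eq_of_mem_replicate hx]; simp
    · have := ih row hrow x hx; simp; omega
  | case3 c p ps q qs ih =>
    intro row hrow x hx
    simp only [mem_cons] at hrow
    rcases hrow with rfl | rfl | hrow
    · rw [eq_of_mem_replicate hx]; simp
    · rw [eq_of_mem_replicate hx]; simp
    · have := ih row hrow x hx; simp; omega

theorem eq_replicate_of_mem_pairRows :
    ∀ row ∈ pairRows c ps qs, ∃ a, row = replicate row.length a := by
  fun_induction pairRows c ps qs with
  | case1 => simp
  | case2 c p ps ih => simpa using ih
  | case3 c p ps q qs ih => simpa using ih

theorem map_length_pairRows_perm (h : qs.length ≤ ps.length) :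
    (pairRows c ps qs).map length ~ ps ++ qs := by
  fun_induction pairRows c ps qs with
  | case1 => simp_all
  | case2 c p ps ih => simpa using ih (by simp)
  | case3 c p ps q qs ih =>
    simp only [map_cons, length_replicate, cons_append]
    exact ((ih (by simpa using h)).cons q).trans perm_middle.symm |>.cons p

theorem barCondition_pairRows (hodd : ∀ p ∈ ps, p % 2 = 1) (heven : ∀ q ∈ qs, q % 2 = 0)
    (v : ℕ) : BarCondition (pairRows c ps qs) v := by
  fun_induction pairRows c ps qs generalizing v with
  | case1 => exact barCondition_of_forall_not_mem (by simp)
  | case2 c p ps ih =>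
    have hp := hodd p (by simp)
    refine barCondition_append (A := [_]) (fun v => barCondition_singleton fun hv => ?_)
      (ih (fun p hp => hodd p (by simp [hp])) heven) ?_ v
    · rw [eq_of_mem_replicate hv, count_replicate_self, Nat.odd_iff, hp]
    · intro ra hra rb hrb x hxa hxb
      have := bounds_of_mem_pairRows rb hrb x hxb
      rw [mem_singleton.mp hra] at hxa
      rw [eq_of_mem_replicate hxa] at this
      omega
  | case3 c p ps q qs ih =>
    have hp := hodd p (by simp)
    have hq := heven q (by simp)
    refine barCondition_append (A := [_, _]) (fun v => barCondition_pair ?_ ?_)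
      (ih (fun p hp => hodd p (by simp [hp])) (fun q hq => heven q (by simp [hq]))) ?_ v
    · intro hv
      rcases hv with hv | hv <;> rw [eq_of_mem_replicate hv] <;>
        simp [Nat.odd_iff] <;> omega
    · intro hvp hvq
      obtain ⟨hp0, rfl⟩ := mem_replicate.mp hvp
      simp [head?_replicate, hp0, (mem_replicate.mp hvq).1]
    · intro ra hra rb hrb x hxa hxb
      have := bounds_of_mem_pairRows rb hrb x hxb
      simp only [mem_cons, not_mem_nil, or_false] at hra
      rcases hra with rfl | rfl <;> rw [eq_of_mem_replicate hxa] at this <;> omega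

end PairRows

section LowerBound

variable {l : List ℕ} {T : List (List ℕ)}

/-- Two rows sharing their last label `v` are the only rows containing `v`, so both start with
`v`; being weakly increasing they are constant, and the odd count of `v` is the sum of
their lengths. -/
theorem length_mod_two_ne_of_getLast?_eq (hT : IsBarTableau l T) {r s : List ℕ}
    (hrs : [r, s] <+ T) {v : ℕ} (hr : r.getLast? = some v) (hs : s.getLast? = some v) :
    r.length % 2 ≠ s.length % 2 := by
  obtain ⟨-, -, hchain, hodd, hle2, hhead, -⟩ := hT
  have hvr := mem_of_getLast? hr
  have hvs := mem_of_getLast? hs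
  have hsub : [r, s] <+ T.filter (fun row => decide (v ∈ row)) := by
    simpa [filter_cons, hvr, hvs] using hrs.filter (fun row => decide (v ∈ row))
  have htwo : T.countP (fun row => decide (v ∈ row)) = 2 :=
    le_antisymm (hle2 v)
      (by simpa [hvr, hvs] using hrs.countP_le (p := fun row => decide (v ∈ row)))
  have hfilter : T.filter (fun row => decide (v ∈ row)) = [r, s] :=
    (hsub.eq_of_length (by rw [← countP_eq_length_filter, htwo]; rfl)).symm
  have hrT : r ∈ T := hrs.subset (by simp)
  have hsT : s ∈ T := hrs.subset (by simp)
  have hrc := eq_replicate_of_isChain (hchain r hrT) (hhead v htwo r hrT hvr) hr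
  have hsc := eq_replicate_of_isChain (hchain s hsT) (hhead v htwo s hsT hvs) hs
  have hcount : T.flatten.count v = r.length + s.length := by
    rw [← count_flatten_filter_mem, hfilter, flatten_cons, flatten_cons, flatten_nil, append_nil,
      count_append, hrc, hsc, count_replicate_self, count_replicate_self, length_replicate,
      length_replicate]
  have := Nat.odd_iff.mp (hodd v (mem_flatten.mpr ⟨r, hrT, hvr⟩))
  omega

theorem length_filter_mod_two_le_numBars (hT : IsBarTableau l T) (hpos : ∀ x ∈ l, 0 < x)
    (par : ℕ) : (l.filter (fun x => x % 2 = par)).length ≤ numBars T := by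
  have hlast : ∀ row ∈ T, row.getLast? = some (row.getLastD 0) := by
    intro row hrow
    have hrow : row ≠ [] := ne_nil_of_length_pos (hpos row.length (hT.1 ▸ mem_map_of_mem hrow))
    rw [getLastD_eq_getLast?, getLast?_eq_some_getLast hrow]; rfl
  set P := T.filter (fun row => row.length % 2 = par)
  have hlen : (l.filter (fun x => x % 2 = par)).length = P.length := by
    rw [← hT.1, filter_map, length_map]; rfl
  have hnodup : (P.map (·.getLastD 0)).Nodup := by
    refine nodup_iff_sublist.mpr fun v hv => ?_
    obtain ⟨_ | ⟨r, _ | ⟨s, _ | _⟩⟩, hrs, heq⟩ := sublist_map_iff.mp hv <;> simp at heq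
    have hrsT := hrs.trans (filter_sublist (l := T))
    have hrP : r ∈ P := hrs.subset (by simp)
    have hsP : s ∈ P := hrs.subset (by simp)
    refine length_mod_two_ne_of_getLast?_eq hT hrsT (v := v) ?_ ?_ ?_
    · rw [hlast r (mem_of_mem_filter hrP), heq.1, getLastD_eq_getLast?]
    · rw [hlast s (mem_of_mem_filter hsP), heq.2, getLastD_eq_getLast?]
    · simp only [P, mem_filter, decide_eq_true_eq] at hrP hsP
      rw [hrP.2, hsP.2]
  have hsub : P.map (·.getLastD 0) ⊆ T.flatten.dedup := by
    intro v hv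
    obtain ⟨row, hrow, rfl⟩ := mem_map.mp hv
    have hrowT := mem_of_mem_filter hrow
    exact mem_dedup.mpr (mem_flatten.mpr ⟨row, hrowT, mem_of_getLast? (hlast row hrowT)⟩)
  rw [hlen, ← length_map (f := (·.getLastD 0))]
  exact (hnodup.subperm hsub).length_le

theorem sum_mod_two (l : List ℕ) : l.sum % 2 = (l.filter (fun x => x % 2 = 1)).length % 2 := by
  induction l with
  | nil => rfl
  | cons a l ih => by_cases h : a % 2 = 1 <;> simp [h] <;> omega

theorem numBars_mod_two (hT : IsBarTableau l T) : numBars T % 2 = l.sum % 2 := by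
  rw [numBars, ← hT.1, ← length_flatten, ← sum_map_count_dedup_eq_length T.flatten,
    sum_map_mod_two fun v hv => Nat.odd_iff.mp (hT.2.2.2.1 v (mem_dedup.mp hv))]

end LowerBound

def oddParts (l : List ℕ) : List ℕ := l.filter (fun x => x % 2 = 1)

def evenParts (l : List ℕ) : List ℕ := l.filter (fun x => x % 2 = 0)

def pairedEvenParts (l : List ℕ) : List ℕ := (evenParts l).take (oddParts l).length

def unpairedEvenParts (l : List ℕ) : List ℕ := (evenParts l).drop (oddParts l).length

/-- The rows of the construction, in an order of convenience: every condition except the shape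
is invariant under permuting rows, and `exists_perm_map_eq` sorts them into the shape `l`. -/
def minimalRows (l : List ℕ) : List (List ℕ) :=
  chainRows 1 (unpairedEvenParts l) ++
    pairRows (2 * (((unpairedEvenParts l).length + 1) / 2) + 1) (oddParts l) (pairedEvenParts l)

section MinimalRows

variable {l : List ℕ}

theorem mem_oddParts {x : ℕ} : x ∈ oddParts l ↔ x ∈ l ∧ x % 2 = 1 := by simp [oddParts]

theorem mem_evenParts {x : ℕ} : x ∈ evenParts l ↔ x ∈ l ∧ x % 2 = 0 := by simp [evenParts]

theorem mem_of_mem_unpairedEvenParts {x : ℕ} (hx : x ∈ unpairedEvenParts l) :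
    x ∈ l ∧ x % 2 = 0 :=
  mem_evenParts.mp (mem_of_mem_drop hx)

theorem bounds_of_mem_minimalRows :
    ∀ row ∈ minimalRows l, ∀ x ∈ row,
      1 ≤ x ∧ x ≤ 2 * (((unpairedEvenParts l).length + 1) / 2) + (oddParts l).length := by
  intro row hrow x hx
  rcases mem_append.mp hrow with hrow | hrow
  · have := bounds_of_mem_chainRows row hrow x hx; omega
  · have := bounds_of_mem_pairRows row hrow x hx; omega

theorem map_length_minimalRows_perm (hpos : ∀ x ∈ l, 0 < x) :
    (minimalRows l).map length ~ l := by
  have heven : evenParts l = l.filter (fun x => !decide (x % 2 = 1)) :=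
    filter_congr fun x _ => by rcases Nat.mod_two_eq_zero_or_one x with h | h <;> simp [h]
  rw [minimalRows, map_append,
    map_length_chainRows fun q hq => hpos q (mem_of_mem_unpairedEvenParts hq).1]
  calc unpairedEvenParts l ++ _ ~ unpairedEvenParts l ++ (oddParts l ++ pairedEvenParts l) :=
        (map_length_pairRows_perm (length_take_le _ _)).append_left _
    _ ~ oddParts l ++ (pairedEvenParts l ++ unpairedEvenParts l) :=
        perm_append_comm.trans (by rw [append_assoc])
    _ = oddParts l ++ evenParts l := by rw [pairedEvenParts, unpairedEvenParts, take_append_drop]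
    _ ~ l := by rw [heven]; exact filter_append_perm _ l

theorem exists_cons_replicate_of_mem_minimalRows (hpos : ∀ x ∈ l, 0 < x) :
    ∀ row ∈ minimalRows l, ∃ a b m, a ≤ b ∧ row = a :: replicate m b := by
  intro row hrow
  have hlen : 0 < row.length :=
    hpos _ ((map_length_minimalRows_perm hpos).mem_iff.mp (mem_map_of_mem hrow))
  rcases mem_append.mp hrow with hrow | hrow
  · exact exists_cons_replicate_of_mem_chainRows
      (fun q hq => hpos q (mem_of_mem_unpairedEvenParts hq).1) row hrow
  · obtain ⟨a, ha⟩ := eq_replicate_of_mem_pairRows row hrow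
    obtain ⟨m, hm⟩ := Nat.exists_eq_add_one.mpr hlen
    exact ⟨a, a, m, le_rfl, by rw [ha, hm, replicate_succ]⟩

theorem barCondition_minimalRows (v : ℕ) : BarCondition (minimalRows l) v := by
  refine barCondition_append
    (barCondition_chainRows fun q hq => (mem_of_mem_unpairedEvenParts hq).2)
    (barCondition_pairRows (fun p hp => (mem_oddParts.mp hp).2)
      (fun q hq => (mem_evenParts.mp (mem_of_mem_take hq)).2))
    (fun ra hra rb hrb x hxa hxb => ?_) v
  have := bounds_of_mem_chainRows ra hra x hxa
  have := bounds_of_mem_pairRows rb hrb x hxb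
  omega

theorem nodup_cutLengths_minimalRows (hnd : l.Nodup) (hpos : ∀ x ∈ l, 0 < x) (t : ℕ) :
    (cutLengths t (minimalRows l)).Nodup := by
  by_cases ht : t ≤ 2 * (((unpairedEvenParts l).length + 1) / 2)
  · rw [minimalRows, cutLengths_append,
      cutLengths_eq_nil (T := pairRows _ _ _) fun row hrow x hx => by
        have := bounds_of_mem_pairRows row hrow x hx; omega,
      append_nil]
    exact (nodup_cutLengths_chainRows ((hnd.filter _).sublist (drop_sublist _ _))
      (fun q hq => (mem_of_mem_unpairedEvenParts hq).2)
      (fun q hq => hpos q (mem_of_mem_unpairedEvenParts hq).1) t).1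
  · refine nodup_cutLengths ((map_length_minimalRows_perm hpos).nodup_iff.mpr hnd)
      fun row hrow => ?_
    rcases mem_append.mp hrow with hrow | hrow
    · exact Or.inl fun x hx => by have := bounds_of_mem_chainRows row hrow x hx; omega
    · obtain ⟨a, ha⟩ := eq_replicate_of_mem_pairRows row hrow
      by_cases hat : a ≤ t
      · exact Or.inl fun x hx => by rw [ha] at hx; rwa [eq_of_mem_replicate hx]
      · exact Or.inr fun x hx => by rw [ha] at hx; rw [eq_of_mem_replicate hx]; omega

theorem numBars_minimalRows_le :
    numBars (minimalRows l) ≤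
      2 * (((unpairedEvenParts l).length + 1) / 2) + (oddParts l).length :=
  numBars_le bounds_of_mem_minimalRows

theorem isBarTableau_of_perm_minimalRows {T : List (List ℕ)} (hT : T ~ minimalRows l)
    (hlen : T.map length = l) (hnd : l.Nodup) (hpos : ∀ x ∈ l, 0 < x) : IsBarTableau l T := by
  have hbar (v : ℕ) : BarCondition T v := (barCondition_minimalRows v).perm hT.symm
  refine ⟨hlen, fun row hrow x hx => (bounds_of_mem_minimalRows row (hT.mem_iff.mp hrow) x hx).1,
    fun row hrow => ?_, fun v => (hbar v).1, fun v => (hbar v).2.1, fun v => (hbar v).2.2,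
    fun t => (cutLengths_perm hT).nodup_iff.mpr (nodup_cutLengths_minimalRows hnd hpos t)⟩
  obtain ⟨a, b, m, hab, rfl⟩ :=
    exists_cons_replicate_of_mem_minimalRows hpos row (hT.mem_iff.mp hrow)
  exact isChain_cons_replicate m hab

theorem numBars_minimalRows_le_numBars (hpos : ∀ x ∈ l, 0 < x) {T : List (List ℕ)}
    (hT : IsBarTableau l T) : numBars (minimalRows l) ≤ numBars T := by
  have hodd := length_filter_mod_two_le_numBars hT hpos 1
  have heven := length_filter_mod_two_le_numBars hT hpos 0
  have hpar := numBars_mod_two hT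
  have hle := numBars_minimalRows_le (l := l)
  rw [sum_mod_two] at hpar
  rw [unpairedEvenParts, length_drop] at hle
  simp only [oddParts, evenParts] at hle
  omega

end MinimalRows

end MinimalBarTableau

open MinimalBarTableau

/-- There is a minimal bar tableau with no bar boundary an even number of squares
along any row. -/
theorem exists_minimal_no_even_boundary (n : ℕ) (l : List ℕ) (h : IsStrictPartition n l) :
    ∃ T : List (List ℕ), IsBarTableau l T ∧
      (∀ T' : List (List ℕ), IsBarTableau l T' → numBars T ≤ numBars T') ∧
      (∀ row ∈ T, ¬ HasEvenBoundary row) := by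
  obtain ⟨hdec, hpos, -⟩ := h
  obtain ⟨T, hT, hlen⟩ := exists_perm_map_eq (map_length_minimalRows_perm hpos).symm
  refine ⟨T, isBarTableau_of_perm_minimalRows hT hlen hdec.nodup hpos,
    fun T' hT' => numBars_perm hT ▸ numBars_minimalRows_le_numBars hpos hT', fun row hrow => ?_⟩
  obtain ⟨a, b, m, -, rfl⟩ :=
    exists_cons_replicate_of_mem_minimalRows hpos row (hT.mem_iff.mp hrow)
  exact not_hasEvenBoundary_cons_replicate a b m
end

section
/- Let T* be a minimal bar tableau of shape λ (a strict partition) such that no bar boundary occurs an even number of squares along any row. Then every row of odd length is labelled entirely by a single label, and every row of even length is either labelled entirely by a single label or carries exactly two labels, each occurring an odd number of times in that row. -/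
/-
The cells of a weakly increasing row that carry a label `v` form a block, preceded by the smaller
labels and followed by the larger ones. A label other than the first of its row occurs in no other
row, so its block has odd length. The left end of that block is a bar boundary, hence lies an odd
number of squares along the row; if the block stopped before the end of the row, its right end
would be a bar boundary an even number of squares along. So every label other than the first is
the last label of the row: there is at most one, and the row is made of two blocks of odd length.
-/

namespace List

section DecidableEq

variable {α : Type*} [DecidableEq α]

theorem count_flatten_of_countP_mem_eq_one {L : List (List α)}
    {v : α} (hL : L.countP (v ∈ ·) = 1) {row : List α} (hrow : row ∈ L) (hv : v ∈ row) :
    L.flatten.count v = row.count v := by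
  obtain ⟨s, t, rfl⟩ := append_of_mem hrow
  have hst : (∀ r ∈ s, v ∉ r) ∧ ∀ r ∈ t, v ∉ r := by
    have : s.countP (v ∈ ·) + t.countP (v ∈ ·) = 0 := by
      simp only [countP_append, countP_cons, hv, decide_true, if_true] at hL
      omega
    simpa [countP_eq_zero] using this
  simp [count_eq_zero.mpr (mt mem_flatten.mp (by simpa using hst.1)),
    count_eq_zero.mpr (mt mem_flatten.mp (by simpa using hst.2))]

theorem length_dedup_replicate {a : α} {n : ℕ} (hn : n ≠ 0) :
    (replicate n a).dedup.length = 1 := by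
  rw [← card_toFinset, toFinset_replicate_of_ne_zero hn, Finset.card_singleton]

theorem length_dedup_replicate_append_replicate {a b : α} {k m : ℕ} (hk : k ≠ 0) (hm : m ≠ 0)
    (hab : a ≠ b) : (replicate k a ++ replicate m b).dedup.length = 2 := by
  rw [← card_toFinset, toFinset_append, toFinset_replicate_of_ne_zero hk,
    toFinset_replicate_of_ne_zero hm]
  exact Finset.card_pair hab

end DecidableEq

theorem Pairwise.filter_lt_append_replicate_append_filter_gt {α : Type*} [LinearOrder α]
    {l : List α} (hl : l.Pairwise (· ≤ ·)) (v : α) :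
    l.filter (· < v) ++ replicate (l.count v) v ++ l.filter (v < ·) = l := by
  induction l with
  | nil => simp
  | cons x l ih =>
    obtain ⟨hx, hl⟩ := pairwise_cons.mp hl
    rcases lt_trichotomy x v with hxv | rfl | hvx
    · simpa [hxv, not_lt_of_gt hxv, count_cons, hxv.ne] using ih hl
    · have hlt : l.filter (· < x) = [] :=
        filter_eq_nil_iff.mpr fun y hy => by simpa using hx y hy
      simpa [hlt, count_cons, replicate_succ] using ih hl
    · have hlt : l.filter (· < v) = [] :=
        filter_eq_nil_iff.mpr fun y hy => by simpa using (hvx.trans_le (hx y hy)).le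
      have hgt : l.filter (v < ·) = l :=
        filter_eq_self.mpr fun y hy => by simpa using hvx.trans_le (hx y hy)
      have hcount : l.count v = 0 :=
        count_eq_zero.mpr fun hv => (hvx.trans_le (hx v hv)).ne rfl
      simp [hvx, not_lt_of_gt hvx, hvx.ne', hlt, hgt, hcount]

end List

open List

-- A split `row = a ++ b` with `a` strictly below `b` is a bar boundary `a.length` squares along.
def OddBoundaries {α : Type*} [Preorder α] (row : List α) : Prop :=
  ∀ a b, row = a ++ b → a ≠ [] → b ≠ [] → (∀ x ∈ a, ∀ y ∈ b, x < y) →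
    Odd a.length

theorem oddBoundaries_of_not_hasEvenBoundary {row : List ℕ} (h : ¬ HasEvenBoundary row) :
    OddBoundaries row := by
  rintro a (_ | ⟨y, b⟩) rfl ha hb hab
  · exact absurd rfl hb
  refine Nat.not_even_iff_odd.mp fun heven =>
    h ⟨a.length, length_pos_iff.mpr ha, heven, by simp, ?_⟩
  simpa using fun x hx => hab x hx y mem_cons_self

namespace OddBoundaries

variable {α : Type*} [LinearOrder α] {row : List α}

theorem eq_append_replicate (hsorted : row.Pairwise (· ≤ ·)) (hbound : OddBoundaries row)
    {v : α} (hv : v ∈ row) (hhead : row.head? ≠ some v) (hodd : Odd (row.count v)) :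
    ∃ a, row = a ++ replicate (row.count v) v ∧ Odd a.length ∧ ∀ x ∈ a, x < v := by
  set a := row.filter (· < v)
  set c := row.filter (v < ·)
  have hsplit : a ++ replicate (row.count v) v ++ c = row :=
    hsorted.filter_lt_append_replicate_append_filter_gt v
  have hcount : row.count v ≠ 0 := (count_pos_iff.mpr hv).ne'
  have hlt : ∀ x ∈ a, x < v := fun x hx => by simpa using (mem_filter.mp hx).2
  have hgt : ∀ y ∈ c, v < y := fun y hy => by simpa using (mem_filter.mp hy).2
  have ha : a ≠ [] := by
    intro ha
    apply hhead
    rw [← hsplit, ha, nil_append, head?_append, head?_replicate]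
    simp [hcount]
  have ha_odd : Odd a.length := by
    refine hbound a _ (by rw [← hsplit, append_assoc]) ha (by simp [hcount]) ?_
    intro x hx y hy
    rcases mem_append.mp hy with hy | hy
    · exact (eq_of_mem_replicate hy).symm ▸ hlt x hx
    · exact (hlt x hx).trans (hgt y hy)
  have hc : c = [] := by
    by_contra hc
    have hab_odd := hbound _ c hsplit.symm (by simp [ha]) hc <| by
      intro x hx y hy
      rcases mem_append.mp hx with hx | hx
      · exact (hlt x hx).trans (hgt y hy)
      · exact (eq_of_mem_replicate hx) ▸ hgt y hy
    rw [length_append, length_replicate] at hab_odd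
    exact Nat.not_odd_iff_even.mpr (ha_odd.add_odd hodd) hab_odd
  rw [hc, append_nil] at hsplit
  exact ⟨a, hsplit.symm, ha_odd, hlt⟩

theorem getLast?_eq (hsorted : row.Pairwise (· ≤ ·)) (hbound : OddBoundaries row)
    {v : α} (hv : v ∈ row) (hhead : row.head? ≠ some v) (hodd : Odd (row.count v)) :
    row.getLast? = some v := by
  obtain ⟨a, ha, -⟩ := hbound.eq_append_replicate hsorted hv hhead hodd
  rw [ha, getLast?_append, getLast?_replicate]
  simp [(count_pos_iff.mpr hv).ne']

theorem eq_replicate_or_eq_replicate_append_replicate (hsorted : row.Pairwise (· ≤ ·))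
    (hbound : OddBoundaries row) {h : α} (hhead : row.head? = some h)
    (hodd : ∀ v ∈ row, row.head? ≠ some v → Odd (row.count v)) :
    row = replicate row.length h ∨
      ∃ v k m, h < v ∧ Odd k ∧ Odd m ∧ row = replicate k h ++ replicate m v := by
  by_cases hall : ∀ x ∈ row, x = h
  · exact Or.inl (eq_replicate_iff.mpr ⟨rfl, hall⟩)
  have hhead_ne : ∀ w, w ≠ h → row.head? ≠ some w := fun w hw hw' =>
    hw (Option.some.inj (hw'.symm.trans hhead))
  obtain ⟨v, hv, hvh⟩ := not_forall₂.mp hall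
  have hv_odd := hodd v hv (hhead_ne v hvh)
  obtain ⟨a, hrow, ha_odd, hlt⟩ := hbound.eq_append_replicate hsorted hv (hhead_ne v hvh) hv_odd
  -- Two distinct non-head labels would both have to be the last label of the row.
  have ha : a = replicate a.length h := by
    refine eq_replicate_iff.mpr ⟨rfl, fun x hx => by_contra fun hxh => ?_⟩
    have hxrow : x ∈ row := hrow ▸ mem_append_left _ hx
    have hx_odd := hodd x hxrow (hhead_ne x hxh)
    have hlast := (hbound.getLast?_eq hsorted hxrow (hhead_ne x hxh) hx_odd).symm.trans
      (hbound.getLast?_eq hsorted hv (hhead_ne v hvh) hv_odd)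
    exact (hlt x hx).ne (Option.some.inj hlast)
  have hhv : h < v := hlt h (ha ▸ mem_replicate.mpr ⟨ha_odd.pos.ne', rfl⟩)
  exact Or.inr ⟨v, a.length, row.count v, hhv, ha_odd, hv_odd, hrow.trans (by rw [← ha])⟩

end OddBoundaries

theorem IsBarTableau.odd_count_of_head?_ne {l : List ℕ} {T : List (List ℕ)}
    (hT : IsBarTableau l T) {row : List ℕ} (hrow : row ∈ T) {v : ℕ} (hv : v ∈ row)
    (hhead : row.head? ≠ some v) : Odd (row.count v) := by
  obtain ⟨-, -, -, hodd, hle_two, hhead_of_two, -⟩ := hT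
  have hpos : 0 < T.countP (v ∈ ·) := countP_pos_iff.mpr ⟨row, hrow, by simpa using hv⟩
  have hne_two : T.countP (v ∈ ·) ≠ 2 := fun h => hhead (hhead_of_two v h row hrow hv)
  have hone : T.countP (v ∈ ·) = 1 := by have := hle_two v; omega
  rw [← count_flatten_of_countP_mem_eq_one hone hrow hv]
  exact hodd v (mem_flatten.mpr ⟨row, hrow, hv⟩)

theorem rows_of_minimal_no_even_boundary_general (n : ℕ) (l : List ℕ) (T : List (List ℕ))
    (hl : IsStrictPartition n l) (hT : IsBarTableau l T)
    (hb : ∀ row ∈ T, ¬ HasEvenBoundary row) :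
    ∀ row ∈ T,
      (Odd row.length → row.dedup.length = 1) ∧
      (Even row.length → row.dedup.length = 1 ∨
        (row.dedup.length = 2 ∧ ∀ v ∈ row, Odd (row.count v))) := by
  intro row hrow
  have hne : row ≠ [] := ne_nil_of_length_pos (hl.2.1 _ (hT.1 ▸ mem_map_of_mem hrow))
  obtain ⟨h, hhead⟩ := Option.ne_none_iff_exists'.mp (mt head?_eq_none_iff.mp hne)
  have hsorted : row.Pairwise (· ≤ ·) := isChain_iff_pairwise.mp (hT.2.2.1 row hrow)
  have hbound := oddBoundaries_of_not_hasEvenBoundary (hb row hrow)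
  rcases hbound.eq_replicate_or_eq_replicate_append_replicate hsorted hhead
    (fun v hv => hT.odd_count_of_head?_ne hrow hv) with hrep | ⟨v, k, m, hhv, hk, hm, hrep⟩
  · have hone : row.dedup.length = 1 := by
      rw [hrep]
      exact length_dedup_replicate (length_pos_iff.mpr hne).ne'
    exact ⟨fun _ => hone, fun _ => Or.inl hone⟩
  · subst hrep
    refine ⟨fun hodd => ?_, fun _ => Or.inr ⟨?_, fun w hw => ?_⟩⟩
    · rw [length_append, length_replicate, length_replicate] at hodd
      exact absurd hodd (Nat.not_odd_iff_even.mpr (hk.add_odd hm))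
    · exact length_dedup_replicate_append_replicate hk.pos.ne' hm.pos.ne' hhv.ne
    · rcases mem_append.mp hw with hw | hw <;> obtain rfl := eq_of_mem_replicate hw
      · simpa [count_replicate, hhv.ne'] using hk
      · simpa [count_replicate, hhv.ne] using hm

/-- In a minimal bar tableau with no even bar boundaries, every odd row carries a single
label, and every even row carries either a single label or exactly two labels, each
occurring an odd number of times in that row. -/
theorem rows_of_minimal_no_even_boundary (n : ℕ) (l : List ℕ) (T : List (List ℕ))
    (hl : IsStrictPartition n l) (hT : IsBarTableau l T)
    (hmin : ∀ T' : List (List ℕ), IsBarTableau l T' → numBars T ≤ numBars T')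
    (hb : ∀ row ∈ T, ¬ HasEvenBoundary row) :
    ∀ row ∈ T,
      (Odd row.length → row.dedup.length = 1) ∧
      (Even row.length → row.dedup.length = 1 ∨
        (row.dedup.length = 2 ∧ ∀ v ∈ row, Odd (row.count v))) :=
  rows_of_minimal_no_even_boundary_general n l T hl hT hb
end

section
/- For a strict partition λ, an assignment of positive integers to the cells of the shifted diagram S(λ) is a bar tableau in the recursive sense (the cells occupied by the largest label form an r-bar associated with some i ∈ I(λ,r) for an odd r, and removing that r-bar and reordering the rows yields a bar tableau of shape λ(i,r)) if and only if it satisfies the four direct conditions: (1) entries weakly increase from left to right along each row; (2) each integer that appears does so in an odd total number of cells; (3) each integer appears in at most two rows, and if it appears in two rows then its cells form an initial segment (prefix) of both rows; (4) for every integer i, the multiset of nonzero row lengths that remain after deleting all cells with labels greater than i has pairwise distinct elements. -/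
/-- `RemovesBar T T' M r`: the cells of `T` labelled `M` form an `r`-bar, and `T'` is
obtained from `T` by removing this bar and reordering the rows (rows left empty are
discarded).  Either (type 1 / type 2) the bar is the rightmost `r` cells of a single
row `i` and `M` occurs nowhere else, or (type 3) the bar consists of two entire rows
with `r` cells in total. -/
def RemovesBar (T T' : List (List ℕ)) (M r : ℕ) : Prop :=
  (∃ i < T.length, ∃ rest : List ℕ,
      T.getD i [] = rest ++ List.replicate r M ∧ M ∉ rest ∧
      (∀ k < T.length, k ≠ i → M ∉ T.getD k []) ∧
      T'.Perm ((T.set i rest).filter (fun row => !row.isEmpty)))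
  ∨
  (∃ i < T.length, ∃ j < T.length, i ≠ j ∧
      T.getD i [] ≠ [] ∧ T.getD j [] ≠ [] ∧
      (∀ x ∈ T.getD i [], x = M) ∧ (∀ x ∈ T.getD j [], x = M) ∧
      (T.getD i []).length + (T.getD j []).length = r ∧
      (∀ k < T.length, k ≠ i → k ≠ j → M ∉ T.getD k []) ∧
      T'.Perm (((T.set i []).set j []).filter (fun row => !row.isEmpty)))

/-- The recursive definition of a bar tableau: the empty filling is a bar tableau, and a
filling is a bar tableau if the cells occupied by its largest label `M` form an `r`-bar
for some odd `r`, and removing this bar and reordering the rows — the remaining row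
lengths again being pairwise distinct, i.e. the remaining shape is a strict partition
`λ(i,r)` — yields a bar tableau. -/
inductive RecBarTableau : List (List ℕ) → Prop
  | nil : RecBarTableau []
  | step (T T' : List (List ℕ)) (M r : ℕ) :
      Odd r →
      (∀ row ∈ T, ∀ x ∈ row, x ≤ M) →
      (∃ row ∈ T, M ∈ row) →
      RemovesBar T T' M r →
      (T'.map List.length).Pairwise (· > ·) →
      RecBarTableau T' →
      RecBarTableau T

/-!
Both directions are inductions that peel off the largest label `M`. Erasing the cells
labelled `M` preserves conditions (1)–(3), and they lift back from the erased filling exactly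
when those cells form an odd bar: a terminal run of one row, or two rows consisting of `M`
only. In either case erasing them is the removal performed by `RemovesBar`, up to reordering
the rows. Condition (4) at thresholds below `M` is the same for the filling and the erased one.
At thresholds `≥ M` it only asks that the shape be strict: for the filling this is the
hypothesis on `λ`, and for the erased filling, whose shape is the truncation at `M - 1`, it is
the strictness of `λ(i,r)` that the recursion demands.
-/

open List

namespace BarTableau

variable {T T' U : List (List ℕ)} {M r t v i j : ℕ} {rest : List ℕ}

theorem count_flatten_set {α : Type*} [BEq α] [LawfulBEq α] {L : List (List α)}
    (hi : i < L.length) (x : List α) (a : α) :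
    (L.set i x).flatten.count a + L[i].count a = L.flatten.count a + x.count a := by
  rw [(set_perm_cons_eraseIdx hi x).flatten.count_eq,
    ← (getElem_cons_eraseIdx_perm hi).flatten.count_eq]
  simp only [flatten_cons, count_append]
  omega

theorem not_of_countP_set_eq_zero {α : Type*} {p : α → Bool} {L : List α} {x : α} {k : ℕ}
    (h : (L.set i x).countP p = 0) (hk : k < L.length) (hki : k ≠ i) : ¬p L[k] := by
  have := countP_eq_zero.1 h ((L.set i x)[k]'(by simpa using hk)) (getElem_mem _)
  rwa [getElem_set_ne (Ne.symm hki)] at this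

theorem exists_eq_append_replicate_of_pairwise {row : List ℕ} (hs : row.Pairwise (· ≤ ·))
    (hM : ∀ x ∈ row, x ≤ M) : ∃ rest r, row = rest ++ replicate r M ∧ M ∉ rest := by
  induction row with
  | nil => exact ⟨[], 0, rfl, not_mem_nil⟩
  | cons x xs ih =>
    rw [pairwise_cons] at hs
    by_cases hx : x = M
    · subst hx
      refine ⟨[], (x :: xs).length, eq_replicate_iff.2 ⟨rfl, fun y hy => ?_⟩, not_mem_nil⟩
      rcases mem_cons.1 hy with rfl | hy
      · rfl
      · exact le_antisymm (hM y (mem_cons_of_mem _ hy)) (hs.1 y hy)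
    · obtain ⟨rest, r, rfl, hrest⟩ := ih hs.2 fun y hy => hM y (mem_cons_of_mem _ hy)
      exact ⟨x :: rest, r, rfl, by simp [Ne.symm hx, hrest]⟩

theorem forall_eq_of_head?_eq {row : List ℕ} (hs : row.Pairwise (· ≤ ·))
    (hM : ∀ x ∈ row, x ≤ M) (hhead : row.head? = some M) : ∀ x ∈ row, x = M := by
  obtain _ | ⟨y, ys⟩ := row
  · simp at hhead
  obtain rfl : y = M := by simpa using hhead
  intro x hx
  rcases mem_cons.1 hx with rfl | hx
  · rfl
  · exact le_antisymm (hM x (mem_cons_of_mem _ hx)) (rel_of_pairwise_cons hs hx)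

theorem filter_ne_eq_self {row : List ℕ} (h : M ∉ row) : row.filter (· ≠ M) = row :=
  filter_eq_self.2 fun _ hx => decide_eq_true (ne_of_mem_of_not_mem hx h)

theorem filter_ne_eq_nil {row : List ℕ} (h : ∀ x ∈ row, x = M) : row.filter (· ≠ M) = [] :=
  filter_eq_nil_iff.2 fun x hx => by simp [h x hx]

theorem filter_ne_append_replicate {rest : List ℕ} (hrest : M ∉ rest) (r : ℕ) :
    (rest ++ replicate r M).filter (· ≠ M) = rest := by
  rw [filter_append, filter_ne_eq_self hrest,
    filter_ne_eq_nil fun _ hx => eq_of_mem_replicate hx, append_nil]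

def shape (T : List (List ℕ)) : List ℕ :=
  (T.map length).filter (· ≠ 0)

def truncate (t : ℕ) (T : List (List ℕ)) : List (List ℕ) :=
  T.map (·.filter (· ≤ t))

def eraseLabel (M : ℕ) (T : List (List ℕ)) : List (List ℕ) :=
  T.map (·.filter (· ≠ M))

def RowConditions (T : List (List ℕ)) : Prop :=
  (∀ row ∈ T, row.Pairwise (· ≤ ·)) ∧
  (∀ v ∈ T.flatten, Odd (T.flatten.count v)) ∧
  (∀ v, T.countP (v ∈ ·) ≤ 2) ∧
  (∀ v, T.countP (v ∈ ·) = 2 → ∀ row ∈ T, v ∈ row → row.head? = some v)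

def StrictTruncations (T : List (List ℕ)) : Prop :=
  ∀ t, (shape (truncate t T)).Nodup

theorem rowConditions_perm (h : T.Perm U) (hT : RowConditions T) : RowConditions U := by
  obtain ⟨hsorted, hodd, hle, hhead⟩ := hT
  refine ⟨fun row hrow => hsorted row (h.mem_iff.2 hrow), fun v hv => ?_, fun v => ?_,
    fun v hv row hrow => hhead v (h.countP_eq _ ▸ hv) row (h.mem_iff.2 hrow)⟩
  · rw [← h.flatten.count_eq]
    exact hodd v (h.flatten.mem_iff.2 hv)
  · exact h.countP_eq _ ▸ hle v

theorem countP_mem_filter_nonempty (v : ℕ) (T : List (List ℕ)) :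
    (T.filter fun row => !row.isEmpty).countP (v ∈ ·) = T.countP (v ∈ ·) := by
  rw [countP_filter]
  exact countP_congr fun row _ => by cases row <;> simp

theorem rowConditions_filter_nonempty :
    RowConditions (T.filter fun row => !row.isEmpty) ↔ RowConditions T := by
  simp only [RowConditions, flatten_filter_not_isEmpty, countP_mem_filter_nonempty, mem_filter]
  refine and_congr ⟨fun h row hrow => ?_, fun h row hrow => h row hrow.1⟩
    (and_congr Iff.rfl (and_congr Iff.rfl (forall_congr' fun v => imp_congr_right fun _ =>
      ⟨fun h row hrow hv => h row ⟨hrow, ?_⟩ hv, fun h row hrow => h row hrow.1⟩)))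
  · cases row
    · exact Pairwise.nil
    · exact h _ ⟨hrow, rfl⟩
  · cases row <;> simp_all

theorem rowConditions_congr (h : T'.Perm (U.filter fun row => !row.isEmpty)) :
    RowConditions T' ↔ RowConditions U :=
  ⟨fun hT' => rowConditions_filter_nonempty.1 (rowConditions_perm h hT'),
    fun hU => rowConditions_perm h.symm (rowConditions_filter_nonempty.2 hU)⟩

theorem shape_truncate_filter_nonempty (t : ℕ) (T : List (List ℕ)) :
    shape (truncate t (T.filter fun row => !row.isEmpty)) = shape (truncate t T) := by
  induction T with
  | nil => rfl
  | cons row T ih => cases row <;> simp_all [shape, truncate, filter_cons]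

theorem shape_truncate_perm (t : ℕ) (h : T.Perm U) :
    (shape (truncate t T)).Perm (shape (truncate t U)) :=
  ((h.map _).map _).filter _

theorem strictTruncations_congr (h : T'.Perm (U.filter fun row => !row.isEmpty)) :
    StrictTruncations T' ↔ StrictTruncations U :=
  forall_congr' fun t => by
    rw [(shape_truncate_perm t h).nodup_iff, shape_truncate_filter_nonempty]

theorem flatten_eraseLabel (M : ℕ) (T : List (List ℕ)) :
    (eraseLabel M T).flatten = T.flatten.filter (· ≠ M) := by
  simp [eraseLabel]

theorem mem_flatten_eraseLabel : v ∈ (eraseLabel M T).flatten ↔ v ∈ T.flatten ∧ v ≠ M := by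
  rw [flatten_eraseLabel, mem_filter, decide_eq_true_iff]

theorem count_flatten_eraseLabel (hv : v ≠ M) :
    (eraseLabel M T).flatten.count v = T.flatten.count v := by
  rw [flatten_eraseLabel, count_filter (by simpa using hv)]

theorem count_flatten_eraseLabel_self : (eraseLabel M T).flatten.count M = 0 := by
  rw [flatten_eraseLabel, count_eq_zero]
  simp

theorem countP_mem_eraseLabel (hv : v ≠ M) :
    (eraseLabel M T).countP (v ∈ ·) = T.countP (v ∈ ·) := by
  rw [eraseLabel, countP_map]
  exact countP_congr fun row _ => by simp [hv]

theorem countP_mem_eraseLabel_self : (eraseLabel M T).countP (M ∈ ·) = 0 := by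
  simp [eraseLabel, countP_eq_zero]

theorem length_flatten_eraseLabel_lt (h : M ∈ T.flatten) :
    (eraseLabel M T).flatten.length < T.flatten.length := by
  rw [flatten_eraseLabel]
  exact length_filter_lt_length_iff_exists.2 ⟨M, h, by simp⟩

theorem rowConditions_eraseLabel (hT : RowConditions T) : RowConditions (eraseLabel M T) := by
  obtain ⟨hsorted, hodd, hle, hhead⟩ := hT
  refine ⟨fun row hrow => ?_, fun v hv => ?_, fun v => ?_, fun v hv row hrow hvrow => ?_⟩
  · obtain ⟨row', hrow', rfl⟩ := mem_map.1 hrow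
    exact (hsorted row' hrow').filter _
  · rw [mem_flatten_eraseLabel] at hv
    rw [count_flatten_eraseLabel hv.2]
    exact hodd v hv.1
  · rcases eq_or_ne v M with rfl | hv
    · simp [countP_mem_eraseLabel_self]
    · rw [countP_mem_eraseLabel hv]
      exact hle v
  · have hvM : v ≠ M := (mem_flatten_eraseLabel.1 (mem_flatten.2 ⟨row, hrow, hvrow⟩)).2
    rw [countP_mem_eraseLabel hvM] at hv
    obtain ⟨row', hrow', rfl⟩ := mem_map.1 hrow
    have := hhead v hv row' hrow' (mem_filter.1 hvrow).1
    obtain ⟨w, ws, rfl⟩ := exists_cons_of_ne_nil (ne_nil_of_mem (mem_filter.1 hvrow).1)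
    obtain rfl : w = v := by simpa using this
    simp [hvM]

structure LabelFormsBar (T : List (List ℕ)) (M : ℕ) : Prop where
  exists_eq_append_replicate : ∀ row ∈ T, ∃ rest r, row = rest ++ replicate r M ∧ M ∉ rest
  odd_count : M ∈ T.flatten → Odd (T.flatten.count M)
  countP_le : T.countP (M ∈ ·) ≤ 2
  forall_eq_of_countP_eq_two : T.countP (M ∈ ·) = 2 → ∀ row ∈ T, M ∈ row → ∀ x ∈ row, x = M

theorem labelFormsBar_of_rowConditions (hM : ∀ row ∈ T, ∀ x ∈ row, x ≤ M)
    (hT : RowConditions T) : LabelFormsBar T M where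
  exists_eq_append_replicate row hrow := exists_eq_append_replicate_of_pairwise (hT.1 row hrow) (hM row hrow)
  odd_count := hT.2.1 M
  countP_le := hT.2.2.1 M
  forall_eq_of_countP_eq_two h2 row hrow hMrow :=
    forall_eq_of_head?_eq (hT.1 row hrow) (hM row hrow) (hT.2.2.2 M h2 row hrow hMrow)

theorem rowConditions_of_eraseLabel (hM : ∀ row ∈ T, ∀ x ∈ row, x ≤ M)
    (hS : RowConditions (eraseLabel M T)) (hbar : LabelFormsBar T M) : RowConditions T := by
  obtain ⟨hsorted, hodd, hle, hhead⟩ := hS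
  have hmemS : ∀ {row}, row ∈ T → row.filter (· ≠ M) ∈ eraseLabel M T := mem_map_of_mem
  refine ⟨fun row hrow => ?_, fun v hv => ?_, fun v => ?_, fun v hv row hrow hvrow => ?_⟩
  · obtain ⟨rest, r, rfl, hrest⟩ := hbar.exists_eq_append_replicate row hrow
    have := hsorted _ (hmemS hrow)
    rw [filter_ne_append_replicate hrest] at this
    refine pairwise_append.2 ⟨this, pairwise_replicate.2 (Or.inr le_rfl), fun x hx y hy => ?_⟩
    rw [eq_of_mem_replicate hy]
    exact hM _ hrow x (mem_append_left _ hx)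
  · rcases eq_or_ne v M with rfl | hvM
    · exact hbar.odd_count hv
    · rw [← count_flatten_eraseLabel hvM]
      exact hodd v (mem_flatten_eraseLabel.2 ⟨hv, hvM⟩)
  · rcases eq_or_ne v M with rfl | hvM
    · exact hbar.countP_le
    · rw [← countP_mem_eraseLabel hvM]
      exact hle v
  · rcases eq_or_ne v M with rfl | hvM
    · obtain ⟨w, ws, rfl⟩ := exists_cons_of_ne_nil (ne_nil_of_mem hvrow)
      simp [hbar.forall_eq_of_countP_eq_two hv _ hrow hvrow w mem_cons_self]
    · obtain ⟨rest, r, rfl, hrest⟩ := hbar.exists_eq_append_replicate row hrow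
      rw [← countP_mem_eraseLabel hvM] at hv
      have := hhead v hv _ (hmemS hrow) (by simpa [hvM] using hvrow)
      rw [filter_ne_append_replicate hrest] at this
      simp [this]

theorem rowConditions_iff_eraseLabel (hM : ∀ row ∈ T, ∀ x ∈ row, x ≤ M) :
    RowConditions T ↔ RowConditions (eraseLabel M T) ∧ LabelFormsBar T M :=
  ⟨fun hT => ⟨rowConditions_eraseLabel hT, labelFormsBar_of_rowConditions hM hT⟩,
    fun ⟨hS, hbar⟩ => rowConditions_of_eraseLabel hM hS hbar⟩

-- An `r`-bar in `I_+` (or in `I_0`, when `rest = []`): the last `r` cells of row `i`.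
structure SingleRowBar (T : List (List ℕ)) (M i r : ℕ) (rest : List ℕ) : Prop where
  lt_length : i < T.length
  getElem_eq : T[i] = rest ++ replicate r M
  not_mem_rest : M ∉ rest
  not_mem_of_ne : ∀ k (hk : k < T.length), k ≠ i → M ∉ T[k]

namespace SingleRowBar

theorem set_eq_eraseLabel (h : SingleRowBar T M i r rest) : T.set i rest = eraseLabel M T := by
  refine ext_getElem (by simp [eraseLabel]) fun k hk _ => ?_
  simp only [eraseLabel, getElem_map, getElem_set]
  split_ifs with hik
  · subst hik
    rw [h.getElem_eq, filter_ne_append_replicate h.not_mem_rest]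
  · exact (filter_ne_eq_self (h.not_mem_of_ne k (by simpa using hk) (Ne.symm hik))).symm

theorem count_flatten (h : SingleRowBar T M i r rest) : T.flatten.count M = r := by
  have hc := count_flatten_set h.lt_length rest M
  rw [h.set_eq_eraseLabel, count_flatten_eraseLabel_self, h.getElem_eq, count_append,
    count_replicate_self, count_eq_zero.2 h.not_mem_rest] at hc
  omega

theorem countP_mem_le_one (h : SingleRowBar T M i r rest) : T.countP (M ∈ ·) ≤ 1 := by
  have hc := countP_set (p := (M ∈ ·)) (a := rest) h.lt_length
  rw [h.set_eq_eraseLabel, countP_mem_eraseLabel_self] at hc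
  simp only [h.not_mem_rest, decide_false] at hc
  split_ifs at hc <;> omega

theorem labelFormsBar (h : SingleRowBar T M i r rest) (hr : Odd r) : LabelFormsBar T M where
  exists_eq_append_replicate row hrow := by
    obtain ⟨k, hk, rfl⟩ := getElem_of_mem hrow
    by_cases hki : k = i
    · subst hki
      exact ⟨rest, r, h.getElem_eq, h.not_mem_rest⟩
    · exact ⟨T[k], 0, by simp, h.not_mem_of_ne k hk hki⟩
  odd_count _ := h.count_flatten ▸ hr
  countP_le := h.countP_mem_le_one.trans one_le_two
  forall_eq_of_countP_eq_two h2 := by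
    have := h.countP_mem_le_one
    omega

theorem removesBar (h : SingleRowBar T M i r rest)
    (hT' : T'.Perm ((eraseLabel M T).filter fun row => !row.isEmpty)) :
    RemovesBar T T' M (T.flatten.count M) := by
  refine .inl ⟨i, h.lt_length, rest, ?_, h.not_mem_rest, fun k hk hki => ?_, ?_⟩
  · rw [getD_eq_getElem _ _ h.lt_length, h.count_flatten, h.getElem_eq]
  · rw [getD_eq_getElem _ _ hk]
    exact h.not_mem_of_ne k hk hki
  · rwa [h.set_eq_eraseLabel]

end SingleRowBar

-- An `r`-bar in `I_-`: the rows `i` and `j` entirely.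
structure PairRowBar (T : List (List ℕ)) (M i j : ℕ) : Prop where
  lt_length_left : i < T.length
  lt_length_right : j < T.length
  ne : i ≠ j
  forall_eq_left : ∀ x ∈ T[i], x = M
  forall_eq_right : ∀ x ∈ T[j], x = M
  not_mem_of_ne : ∀ k (hk : k < T.length), k ≠ i → k ≠ j → M ∉ T[k]

namespace PairRowBar

theorem set_set_eq_eraseLabel (h : PairRowBar T M i j) :
    (T.set i []).set j [] = eraseLabel M T := by
  refine ext_getElem (by simp [eraseLabel]) fun k hk _ => ?_
  simp only [eraseLabel, getElem_map, getElem_set]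
  split_ifs with hjk hik
  · subst hjk
    exact (filter_ne_eq_nil h.forall_eq_right).symm
  · subst hik
    exact (filter_ne_eq_nil h.forall_eq_left).symm
  · exact (filter_ne_eq_self (h.not_mem_of_ne k (by simpa using hk) (Ne.symm hik)
      (Ne.symm hjk))).symm

theorem count_flatten (h : PairRowBar T M i j) :
    T.flatten.count M = (T[i]'h.lt_length_left).length + (T[j]'h.lt_length_right).length := by
  have hci := count_flatten_set h.lt_length_left [] M
  have hcj := count_flatten_set (L := T.set i []) (by simpa using h.lt_length_right) [] M
  rw [h.set_set_eq_eraseLabel, count_flatten_eraseLabel_self, getElem_set_ne h.ne] at hcj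
  rw [count_eq_length.2 fun x hx => (h.forall_eq_left x hx).symm] at hci
  rw [count_eq_length.2 fun x hx => (h.forall_eq_right x hx).symm] at hcj
  simp only [count_nil] at hci hcj
  omega

theorem countP_mem_le_two (h : PairRowBar T M i j) : T.countP (M ∈ ·) ≤ 2 := by
  have hci := countP_set (p := (M ∈ ·)) (a := []) h.lt_length_left
  have hcj := countP_set (l := T.set i []) (p := (M ∈ ·)) (a := [])
    (by simpa using h.lt_length_right)
  rw [h.set_set_eq_eraseLabel, countP_mem_eraseLabel_self] at hcj
  simp only [not_mem_nil, decide_false] at hci hcj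
  split_ifs at hci hcj <;> omega

theorem labelFormsBar (h : PairRowBar T M i j)
    (hr : Odd ((T[i]'h.lt_length_left).length + (T[j]'h.lt_length_right).length)) :
    LabelFormsBar T M where
  exists_eq_append_replicate row hrow := by
    obtain ⟨k, hk, rfl⟩ := getElem_of_mem hrow
    by_cases hki : k = i
    · subst hki
      exact ⟨[], _, eq_replicate_iff.2 ⟨rfl, h.forall_eq_left⟩, not_mem_nil⟩
    by_cases hkj : k = j
    · subst hkj
      exact ⟨[], _, eq_replicate_iff.2 ⟨rfl, h.forall_eq_right⟩, not_mem_nil⟩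
    exact ⟨T[k], 0, by simp, h.not_mem_of_ne k hk hki hkj⟩
  odd_count _ := h.count_flatten ▸ hr
  countP_le := h.countP_mem_le_two
  forall_eq_of_countP_eq_two _ row hrow hMrow := by
    obtain ⟨k, hk, rfl⟩ := getElem_of_mem hrow
    by_cases hki : k = i
    · subst hki
      exact h.forall_eq_left
    by_cases hkj : k = j
    · subst hkj
      exact h.forall_eq_right
    exact absurd hMrow (h.not_mem_of_ne k hk hki hkj)

theorem removesBar (h : PairRowBar T M i j) (hMi : M ∈ T[i]'h.lt_length_left)
    (hMj : M ∈ T[j]'h.lt_length_right)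
    (hT' : T'.Perm ((eraseLabel M T).filter fun row => !row.isEmpty)) :
    RemovesBar T T' M (T.flatten.count M) := by
  have hi := h.lt_length_left
  have hj := h.lt_length_right
  refine .inr ⟨i, hi, j, hj, h.ne, ?_⟩
  simp only [getD_eq_getElem _ _ hi, getD_eq_getElem _ _ hj]
  refine ⟨ne_nil_of_mem hMi, ne_nil_of_mem hMj, h.forall_eq_left, h.forall_eq_right,
    h.count_flatten.symm, fun k hk hki hkj => ?_, ?_⟩
  · rw [getD_eq_getElem _ _ hk]
    exact h.not_mem_of_ne k hk hki hkj
  · rwa [h.set_set_eq_eraseLabel]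

end PairRowBar

theorem perm_and_labelFormsBar_of_removesBar (h : RemovesBar T T' M r) (hr : Odd r) :
    T'.Perm ((eraseLabel M T).filter fun row => !row.isEmpty) ∧ LabelFormsBar T M := by
  rcases h with ⟨i, hi, rest, hrow, hrest, hother, hT'⟩ |
    ⟨i, hi, j, hj, hij, -, -, hrowi, hrowj, hlen, hother, hT'⟩
  · rw [getD_eq_getElem _ _ hi] at hrow
    have hbar : SingleRowBar T M i r rest := ⟨hi, hrow, hrest, fun k hk hki => by
      simpa only [getD_eq_getElem _ _ hk] using hother k hk hki⟩
    rw [hbar.set_eq_eraseLabel] at hT'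
    exact ⟨hT', hbar.labelFormsBar hr⟩
  · simp only [getD_eq_getElem _ _ hi, getD_eq_getElem _ _ hj] at hrowi hrowj hlen
    have hbar : PairRowBar T M i j := ⟨hi, hj, hij, hrowi, hrowj, fun k hk hki hkj => by
      simpa only [getD_eq_getElem _ _ hk] using hother k hk hki hkj⟩
    rw [hbar.set_set_eq_eraseLabel] at hT'
    exact ⟨hT', hbar.labelFormsBar (hlen ▸ hr)⟩

theorem removesBar_of_labelFormsBar (hbar : LabelFormsBar T M) (hM : ∃ row ∈ T, M ∈ row)
    (hT' : T'.Perm ((eraseLabel M T).filter fun row => !row.isEmpty)) :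
    RemovesBar T T' M (T.flatten.count M) := by
  obtain ⟨_, hrow, hMi⟩ := hM
  obtain ⟨i, hi, rfl⟩ := getElem_of_mem hrow
  have hci := countP_set (p := (M ∈ ·)) (a := []) hi
  simp only [hMi, not_mem_nil, decide_true, decide_false, if_true, Bool.false_eq_true,
    if_false, add_zero] at hci
  -- after clearing row `i`, either no row contains `M` or exactly one more does
  rcases Nat.eq_zero_or_pos ((T.set i []).countP (M ∈ ·)) with h0 | hpos
  · obtain ⟨rest, r, hrowi, hrest⟩ := hbar.exists_eq_append_replicate _ hrow
    have hsingle : SingleRowBar T M i r rest :=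
      ⟨hi, hrowi, hrest, fun k hk hki => by simpa using not_of_countP_set_eq_zero h0 hk hki⟩
    exact hsingle.removesBar hT'
  · obtain ⟨_, hrow', hMj⟩ := countP_pos_iff.1 hpos
    obtain ⟨j, hj, rfl⟩ := getElem_of_mem hrow'
    have hji : j ≠ i := by
      rintro rfl
      simp at hMj
    simp only [getElem_set_ne (Ne.symm hji), decide_eq_true_eq] at hMj
    have htwo : T.countP (M ∈ ·) = 2 := by
      have := hbar.countP_le
      omega
    have hcj := countP_set (l := T.set i []) (p := (M ∈ ·)) (a := []) (by simpa using hj)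
    simp only [getElem_set_ne (Ne.symm hji), hMj, not_mem_nil, decide_true, decide_false,
      if_true, Bool.false_eq_true, if_false, add_zero] at hcj
    have h0 : ((T.set i []).set j []).countP (M ∈ ·) = 0 := by omega
    have hpair : PairRowBar T M i j := by
      refine ⟨hi, by simpa using hj, hji.symm,
        hbar.forall_eq_of_countP_eq_two htwo _ hrow hMi,
        hbar.forall_eq_of_countP_eq_two htwo _ (getElem_mem _) hMj, fun k hk hki hkj => ?_⟩
      have := not_of_countP_set_eq_zero h0 (by simpa using hk) hkj
      simpa [getElem_set_ne (Ne.symm hki)] using this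
    exact hpair.removesBar hMi hMj hT'

theorem truncate_eraseLabel_of_lt (ht : t < M) : truncate t (eraseLabel M T) = truncate t T := by
  simp only [truncate, eraseLabel, map_map]
  refine map_congr_left fun row _ => ?_
  simp only [Function.comp_apply, filter_filter]
  exact filter_congr fun x _ => by grind

theorem truncate_of_forall_le (h : ∀ row ∈ T, ∀ x ∈ row, x ≤ t) : truncate t T = T := by
  rw [truncate, map_congr_left fun row hrow =>
    filter_eq_self.2 fun x hx => decide_eq_true (h row hrow x hx), map_id']

theorem shape_eraseLabel_nodup (hM : ∀ row ∈ T, ∀ x ∈ row, x ≤ M) (h : StrictTruncations T) :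
    (shape (eraseLabel M T)).Nodup := by
  obtain _ | m := M
  -- with `M = 0` no cell survives; otherwise erasing `M` is truncating at `M - 1`
  · convert nodup_nil
    simp only [shape, eraseLabel, map_map, filter_eq_nil_iff, mem_map, Function.comp_apply]
    rintro _ ⟨row, hrow, rfl⟩
    simpa [filter_eq_nil_iff] using hM row hrow
  · convert h m using 3
    refine map_congr_left fun row hrow => filter_congr fun x hx => ?_
    have := hM row hrow x hx
    simp only [decide_eq_decide]
    omega

theorem strictTruncations_eraseLabel (hM : ∀ row ∈ T, ∀ x ∈ row, x ≤ M)
    (h : StrictTruncations T) : StrictTruncations (eraseLabel M T) := fun t => by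
  rcases lt_or_ge t M with ht | ht
  · rw [truncate_eraseLabel_of_lt ht]
    exact h t
  · rw [truncate_of_forall_le fun row hrow x hx => ?_]
    · exact shape_eraseLabel_nodup hM h
    obtain ⟨row', hrow', rfl⟩ := mem_map.1 hrow
    exact (hM row' hrow' x (mem_filter.1 hx).1).trans ht

theorem nodup_map_length_of_strictTruncations (hne : ∀ row ∈ T, row ≠ [])
    (h : StrictTruncations T) : (T.map length).Nodup := by
  have := h T.flatten.sum
  rwa [truncate_of_forall_le fun row hrow x hx => le_sum_of_mem (mem_flatten.2 ⟨row, hrow, hx⟩),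
    shape, filter_eq_self.2] at this
  simpa [length_pos_iff] using hne

def sortByLength (T : List (List ℕ)) : List (List ℕ) :=
  T.mergeSort fun a b => b.length ≤ a.length

theorem sortByLength_perm (T : List (List ℕ)) : (sortByLength T).Perm T :=
  mergeSort_perm _ _

theorem pairwise_gt_map_length_sortByLength (h : ((sortByLength T).map length).Nodup) :
    ((sortByLength T).map length).Pairwise (· > ·) := by
  have hsorted := pairwise_mergeSort (le := fun a b : List ℕ => b.length ≤ a.length)
    (fun a b c hab hbc => by simp only [decide_eq_true_eq] at *; omega)
    (fun a b => by simp only [Bool.or_eq_true, decide_eq_true_eq]; omega) T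
  rw [pairwise_map]
  exact (hsorted.and (pairwise_map.1 h)).imp fun ⟨hle, hne⟩ =>
    lt_of_le_of_ne (of_decide_eq_true hle) (Ne.symm hne)

theorem rowConditions_and_strictTruncations_of_recBarTableau (h : RecBarTableau T)
    (hT : (T.map length).Nodup) : RowConditions T ∧ StrictTruncations T := by
  induction h with
  | nil => exact ⟨by simp [RowConditions], fun t => by simp [shape, truncate]⟩
  | step T T' M r hr hM _ hbar hsorted _ ih =>
    obtain ⟨hT', hlabel⟩ := perm_and_labelFormsBar_of_removesBar hbar hr
    obtain ⟨hrowT', htruncT'⟩ := ih (hsorted.imp ne_of_gt)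
    refine ⟨(rowConditions_iff_eraseLabel hM).2 ⟨(rowConditions_congr hT').1 hrowT', hlabel⟩,
      fun t => ?_⟩
    rcases lt_or_ge t M with ht | ht
    · rw [← truncate_eraseLabel_of_lt ht]
      exact (strictTruncations_congr hT').1 htruncT' t
    · rw [truncate_of_forall_le fun row hrow x hx => (hM row hrow x hx).trans ht]
      exact hT.filter _

theorem exists_max_label (hne : ∀ row ∈ T, row ≠ []) (hT : T ≠ []) :
    ∃ M ∈ T.flatten, ∀ row ∈ T, ∀ x ∈ row, x ≤ M := by
  obtain ⟨row, hrow⟩ := exists_mem_of_ne_nil T hT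
  obtain ⟨x, hx⟩ := exists_mem_of_ne_nil row (hne row hrow)
  obtain ⟨M, hMmem, hM⟩ := T.flatten.toFinset.exists_max_image id
    ⟨x, mem_toFinset.2 (mem_flatten.2 ⟨row, hrow, hx⟩)⟩
  exact ⟨M, mem_toFinset.1 hMmem, fun row hrow x hx =>
    hM x (mem_toFinset.2 (mem_flatten.2 ⟨row, hrow, hx⟩))⟩

theorem recBarTableau_of_conditions (hne : ∀ row ∈ T, row ≠ []) (hT : RowConditions T)
    (htrunc : StrictTruncations T) : RecBarTableau T := by
  induction hN : T.flatten.length using Nat.strong_induction_on generalizing T with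
  | _ N ih =>
  rcases eq_or_ne T [] with rfl | hT0
  · exact .nil
  obtain ⟨M, hMmem, hM⟩ := exists_max_label hne hT0
  obtain ⟨hS, hbar⟩ := (rowConditions_iff_eraseLabel hM).1 hT
  set U := (eraseLabel M T).filter fun row => !row.isEmpty
  have hperm : (sortByLength U).Perm U := sortByLength_perm U
  have hneU : ∀ row ∈ sortByLength U, row ≠ [] := fun row hrow => by
    simpa [U] using (mem_filter.1 (hperm.mem_iff.1 hrow)).2
  have htruncU := (strictTruncations_congr hperm).2 (strictTruncations_eraseLabel hM htrunc)
  have hlt : (sortByLength U).flatten.length < N := by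
    rw [hperm.flatten.length_eq, flatten_filter_not_isEmpty, ← hN]
    exact length_flatten_eraseLabel_lt hMmem
  exact .step T (sortByLength U) M _ (hbar.odd_count hMmem) hM (mem_flatten.1 hMmem)
    (removesBar_of_labelFormsBar hbar (mem_flatten.1 hMmem) hperm)
    (pairwise_gt_map_length_sortByLength (nodup_map_length_of_strictTruncations hneU htruncU))
    (ih _ hlt hneU ((rowConditions_congr hperm).2 hS) htruncU rfl)

theorem recBarTableau_iff_conditions (hne : ∀ row ∈ T, row ≠ []) (hT : (T.map length).Nodup) :
    RecBarTableau T ↔ RowConditions T ∧ StrictTruncations T :=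
  ⟨fun h => rowConditions_and_strictTruncations_of_recBarTableau h hT,
    fun ⟨hrow, htrunc⟩ => recBarTableau_of_conditions hne hrow htrunc⟩

end BarTableau

theorem recBarTableau_iff_general (n : ℕ) (l : List ℕ) (T : List (List ℕ))
    (hl : IsStrictPartition n l) (hshape : T.map List.length = l) :
    RecBarTableau T ↔
      ((∀ row ∈ T, row.Chain' (· ≤ ·)) ∧
       (∀ v ∈ T.flatten, Odd (T.flatten.count v)) ∧
       (∀ v : ℕ, T.countP (fun row => decide (v ∈ row)) ≤ 2) ∧
       (∀ v : ℕ, T.countP (fun row => decide (v ∈ row)) = 2 →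
          ∀ row ∈ T, v ∈ row → row.head? = some v) ∧
       (∀ i : ℕ,
         (((T.map (fun row => row.filter (fun x => decide (x ≤ i)))).map List.length).filter
             (fun k => decide (k ≠ 0))).Nodup)) := by
  have hnodup : (T.map length).Nodup := hshape ▸ hl.1.imp ne_of_gt
  have hne : ∀ row ∈ T, row ≠ [] := fun row hrow =>
    ne_nil_of_length_pos (hl.2.1 _ (hshape ▸ mem_map_of_mem hrow))
  rw [BarTableau.recBarTableau_iff_conditions hne hnodup]
  simp only [BarTableau.RowConditions, BarTableau.StrictTruncations, BarTableau.shape,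
    BarTableau.truncate, ← isChain_iff_pairwise, and_assoc]
  rfl

/-- For a filling (by positive integers) of the shifted diagram of a strict partition,
the recursive definition of a bar tableau is equivalent to the four direct conditions. -/
theorem recBarTableau_iff (n : ℕ) (l : List ℕ) (T : List (List ℕ))
    (hl : IsStrictPartition n l) (hshape : T.map List.length = l)
    (hpos : ∀ row ∈ T, ∀ x ∈ row, 0 < x) :
    RecBarTableau T ↔
      ((∀ row ∈ T, row.Chain' (· ≤ ·)) ∧
       (∀ v ∈ T.flatten, Odd (T.flatten.count v)) ∧
       (∀ v : ℕ, T.countP (fun row => decide (v ∈ row)) ≤ 2) ∧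
       (∀ v : ℕ, T.countP (fun row => decide (v ∈ row)) = 2 →
          ∀ row ∈ T, v ∈ row → row.head? = some v) ∧
       (∀ i : ℕ,
         (((T.map (fun row => row.filter (fun x => decide (x ≤ i)))).map List.length).filter
             (fun k => decide (k ≠ 0))).Nodup)) :=
  recBarTableau_iff_general n l T hl hshape
end

section
/- Let λ be a strict partition with o odd parts and e even parts, and let π be a partition all of whose parts are odd with ℓ(π) < max(o, e + (ℓ(λ) mod 2)). Then there exists no bar tableau of shape λ and type π. -/
namespace List

theorem even_sum_iff_even_countP_odd (l : List ℕ) :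
    Even l.sum ↔ Even (l.countP (fun x => decide (Odd x))) := by
  induction l with
  | nil => simp
  | cons a l ih =>
    rw [sum_cons, countP_cons, Nat.even_add, ih]
    by_cases ha : Odd a <;> simp [ha, ← Nat.not_odd_iff_even, Nat.odd_add_one]

theorem even_length_dedup_iff {α : Type*} [DecidableEq α] {L : List α}
    (h : ∀ v ∈ L, Odd (L.count v)) : Even L.dedup.length ↔ Even L.length := by
  rw [← sum_map_count_dedup_eq_length L, even_sum_iff_even_countP_odd, countP_map,
    countP_eq_length.mpr fun x hx => by simpa using h x (mem_dedup.mp hx)]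

theorem count_flatten_eq_sum_filter_mem {α : Type*} [DecidableEq α] (L : List (List α))
    (v : α) :
    L.flatten.count v = ((L.filter (fun r => decide (v ∈ r))).map (count v)).sum := by
  rw [count_flatten]
  induction L with
  | nil => simp
  | cons r L ih => by_cases h : v ∈ r <;> simp [h, ih, count_eq_zero]

theorem forall_eq_of_head?_eq_of_getLast?_eq {α : Type*} [PartialOrder α] {r : List α} {v : α}
    (hr : r.IsChain (· ≤ ·)) (hhead : r.head? = some v) (hlast : r.getLast? = some v) :
    ∀ x ∈ r, x = v := by
  intro x hx
  have hsorted := isChain_iff_pairwise.mp hr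
  apply le_antisymm
  · obtain ⟨s, hs⟩ := getLast?_eq_some_iff.mp hlast
    rw [hs, pairwise_append] at hsorted
    rw [hs, mem_append, mem_singleton] at hx
    exact hx.elim (fun hxs => hsorted.2.2 x hxs v (mem_singleton_self v)) le_of_eq
  · obtain ⟨t, rfl⟩ := head?_eq_some_iff.mp hhead
    exact (mem_cons.mp hx).elim ge_of_eq ((pairwise_cons.mp hsorted).1 x)

theorem countP_odd_add_countP_even (l : List ℕ) :
    l.countP (fun x => decide (Odd x)) + l.countP (fun x => decide (Even x)) = l.length := by
  rw [l.length_eq_countP_add_countP (fun x => decide (Odd x))]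
  congr 1
  exact countP_congr fun x _ => by simp [Nat.not_odd_iff_even]

end List

namespace IsBarTableau

variable {l : List ℕ} {T : List (List ℕ)}

theorem odd_length_add_length_of_getLast?_eq (hT : IsBarTableau l T) {r s : List ℕ} {v : ℕ}
    (hrs : [r, s].Sublist T) (hr : r.getLast? = some v) (hs : s.getLast? = some v) :
    Odd (r.length + s.length) := by
  obtain ⟨-, -, hchain, hodd, hle2, hhead, -⟩ := hT
  have hvr := List.mem_of_getLast? hr
  have hvs := List.mem_of_getLast? hs
  have htwo : T.countP (fun row => decide (v ∈ row)) = 2 := by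
    refine le_antisymm (hle2 v) ?_
    simpa [hvr, hvs] using hrs.countP_le (p := fun row => decide (v ∈ row))
  have hrows : T.filter (fun row => decide (v ∈ row)) = [r, s] := by
    have h := hrs.filter (fun row => decide (v ∈ row))
    rw [List.filter_eq_self.mpr (by simp [hvr, hvs])] at h
    exact (h.eq_of_length (by rw [← List.countP_eq_length_filter, htwo]; rfl)).symm
  have hrT : r ∈ T := hrs.subset (by simp)
  have hsT : s ∈ T := hrs.subset (by simp)
  -- a row ending in `v` also begins with `v`, which lies in two rows, so the row is constant
  have hconst : ∀ row ∈ T, row.getLast? = some v → row.count v = row.length :=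
    fun row hrow hlast => List.count_eq_length.mpr fun x hx =>
      (List.forall_eq_of_head?_eq_of_getLast?_eq (hchain row hrow)
        (hhead v htwo row hrow (List.mem_of_getLast? hlast)) hlast x hx).symm
  have h := hodd v (List.mem_flatten.mpr ⟨r, hrT, hvr⟩)
  rw [List.count_flatten_eq_sum_filter_mem, hrows] at h
  simpa [hconst r hrT hr, hconst s hsT hs] using h

theorem countP_le_numBars (hT : IsBarTableau l T) (hpos : ∀ x ∈ l, 0 < x)
    (q : ℕ → Prop) [DecidablePred q] (hq : ∀ a b, q a → q b → Even (a + b)) :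
    l.countP (fun x => decide (q x)) ≤ numBars T := by
  have hne : ∀ row ∈ T, row ≠ [] := fun row hrow =>
    List.length_pos_iff.mp (hpos _ (hT.1 ▸ List.mem_map_of_mem hrow))
  set S := T.filter (fun row => decide (q row.length))
  have hnodup : (S.map List.getLast?).Nodup := by
    refine List.pairwise_map.mpr (List.pairwise_iff_forall_sublist.mpr fun {r s} hrs heq => ?_)
    have hrsT : [r, s].Sublist T := hrs.trans List.filter_sublist
    have hr := List.mem_filter.mp (hrs.subset (by simp : r ∈ [r, s]))
    have hs := List.mem_filter.mp (hrs.subset (by simp : s ∈ [r, s]))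
    obtain ⟨v, hv⟩ :=
      Option.ne_none_iff_exists'.mp (List.getLast?_eq_none_iff.not.mpr (hne r hr.1))
    exact Nat.not_even_iff_odd.mpr (hT.odd_length_add_length_of_getLast?_eq hrsT hv (heq ▸ hv))
      (hq _ _ (by simpa using hr.2) (by simpa using hs.2))
  have hsub : S.map List.getLast? ⊆ T.flatten.dedup.map some := by
    intro o ho
    obtain ⟨r, hr, rfl⟩ := List.mem_map.mp ho
    have hrT := (List.mem_filter.mp hr).1
    rw [List.getLast?_eq_some_getLast (hne r hrT)]
    exact List.mem_map_of_mem
      (List.mem_dedup.mpr (List.mem_flatten.mpr ⟨r, hrT, List.getLast_mem _⟩))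
  calc l.countP (fun x => decide (q x)) = (S.map List.getLast?).length := by
        rw [← hT.1, List.countP_map, List.length_map, List.countP_eq_length_filter]; rfl
    _ ≤ (T.flatten.dedup.map some).length := (hnodup.subperm hsub).length_le
    _ = numBars T := List.length_map _

theorem even_numBars_iff (hT : IsBarTableau l T) :
    Even (numBars T) ↔ Even (l.countP (fun x => decide (Odd x))) := by
  rw [numBars, List.even_length_dedup_iff hT.2.2.2.1, List.length_flatten, hT.1,
    List.even_sum_iff_even_countP_odd]

end IsBarTableau

theorem no_barTableau_of_short_type_general (l π : List ℕ)
    (hlpos : ∀ x ∈ l, 0 < x)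
    (hlen : π.length < max (l.countP (fun x => decide (Odd x)))
        (l.countP (fun x => decide (Even x)) + l.length % 2)) :
    ¬ ∃ T : List (List ℕ), IsBarTableau l T ∧
        (T.flatten.dedup.map (fun v => T.flatten.count v)).Perm π := by
  rintro ⟨T, hT, hperm⟩
  have hk : π.length = numBars T := by rw [← hperm.length_eq, List.length_map, numBars]
  have hodd := hT.countP_le_numBars hlpos Odd fun a b ha hb => ha.add_odd hb
  have heven := hT.countP_le_numBars hlpos Even fun a b ha hb => ha.add hb
  have hpar := hT.even_numBars_iff
  have hsplit := l.countP_odd_add_countP_even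
  rw [Nat.even_iff, Nat.even_iff] at hpar
  omega

/-- The type of a bar tableau is the partition formed by the sizes of its bars; here the
list of bar sizes is `T.flatten.dedup.map (fun v => T.flatten.count v)`, and `T` has type
`π` iff this list is a rearrangement of `π`.  If `π` is a partition with all parts odd and
fewer parts than `max(o, e + (ℓ(λ) mod 2))`, there is no bar tableau of shape `λ` and
type `π`. -/
theorem no_barTableau_of_short_type (l π : List ℕ)
    (hl : l.Pairwise (· > ·)) (hlpos : ∀ x ∈ l, 0 < x)
    (hπ : π.Pairwise (· ≥ ·)) (hπodd : ∀ x ∈ π, Odd x)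
    (hlen : π.length < max (l.countP (fun x => decide (Odd x)))
        (l.countP (fun x => decide (Even x)) + l.length % 2)) :
    ¬ ∃ T : List (List ℕ), IsBarTableau l T ∧
        (T.flatten.dedup.map (fun v => T.flatten.count v)).Perm π :=
  no_barTableau_of_short_type_general l π hlpos hlen
end

section
/- Let F(λ, π) ∈ ℚ be defined for strict partitions λ of n and partitions π of n with all parts odd by the Morris recurrence: F(∅, ∅) = 1, and for n > 0, taking r to be the largest part of π and π′ the partition obtained by removing one copy of r from π, F(λ, π) = Σ_{i ∈ I(λ,r)} n_i · F(λ(i,r), π′), where n_i = (−1)^{j−i} 2^{1−ε(λ)} if i ∈ I_+, n_i = (−1)^{l−i} if i ∈ I_0, and n_i = (−1)^{j−i+λ_i} 2^{1−ε(λ)} if i ∈ I_− (with F(λ,π) = 0 when I(λ,r) is empty). Then F(λ, π) = 0 whenever ℓ(π) < srank(λ), where srank(λ) = max(o, e + (ℓ(λ) mod 2)) with o and e the numbers of odd and even parts of λ. -/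
/-- The `i`-th part of `l` (1-indexed); parts beyond the length are `0`. -/
def partAt (l : List ℕ) (i : ℕ) : ℕ := l.getD (i - 1) 0

/-- `ε(λ)`: the parity of `λ`, i.e. `1` if the number of even parts is odd, `0` otherwise. -/
def eps (l : List ℕ) : ℕ := (l.countP (fun x => decide (Even x))) % 2

/-- The right-hand side of the Morris recurrence
`F(λ, r·π') = Σ_{i ∈ I(λ,r)} n_i F(λ(i,r), π')`:
* `i ∈ I₊` (witness `j`, the unique one with `λ_{j+1} < λ_i - r < λ_j`) contributes
  `(-1)^{j-i} 2^{1-ε(λ)} F(λ(i,r), π')` where `λ(i,r)` deletes `λ_i` and inserts `λ_i - r`;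
* `i ∈ I₀` (`λ_i = r`) contributes `(-1)^{ℓ-i} F(λ(i,r), π')` where `λ(i,r)` deletes `λ_i`;
* `i ∈ I₋` (witness `j > i` with `λ_i + λ_j = r`) contributes
  `(-1)^{j-i+λ_i} 2^{1-ε(λ)} F(λ(i,r), π')` where `λ(i,r)` deletes `λ_i` and `λ_j`. -/
def morrisSum (F : List ℕ → List ℕ → ℚ) (l : List ℕ) (r : ℕ) (π' : List ℕ) : ℚ :=
  (∑ i ∈ Finset.Icc 1 l.length, ∑ j ∈ Finset.Icc 1 l.length,
      if partAt l (j + 1) < partAt l i - r ∧ partAt l i - r < partAt l j then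
        (-1 : ℚ) ^ (j - i) * (2 : ℚ) ^ (1 - eps l) *
          F ((l.eraseIdx (i - 1)).insertIdx (j - 1) (partAt l i - r)) π'
      else 0)
  + (∑ i ∈ Finset.Icc 1 l.length,
      if partAt l i = r then (-1 : ℚ) ^ (l.length - i) * F (l.eraseIdx (i - 1)) π' else 0)
  + (∑ i ∈ Finset.Icc 1 l.length, ∑ j ∈ Finset.Icc 1 l.length,
      if i < j ∧ partAt l i + partAt l j = r then
        (-1 : ℚ) ^ (j - i + partAt l i) * (2 : ℚ) ^ (1 - eps l) *
          F ((l.eraseIdx (j - 1)).eraseIdx (i - 1)) π'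
      else 0)

def shiftedRank (l : List ℕ) : ℕ :=
  max (l.countP (fun x => decide (Odd x))) (l.countP (fun x => decide (Even x)) + l.length % 2)

theorem List.Perm.shiftedRank_eq {l l' : List ℕ} (h : l.Perm l') :
    shiftedRank l = shiftedRank l' := by
  simp only [shiftedRank, h.countP_eq, h.length_eq]

theorem shiftedRank_cons_of_odd {a : ℕ} (ha : Odd a) (t : List ℕ) :
    shiftedRank (a :: t) = max (t.countP (fun x => decide (Odd x)) + 1)
      (t.countP (fun x => decide (Even x)) + (t.length + 1) % 2) := by
  simp [shiftedRank, ha, Nat.not_even_iff_odd.mpr ha]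

theorem shiftedRank_cons_of_even {a : ℕ} (ha : Even a) (t : List ℕ) :
    shiftedRank (a :: t) = max (t.countP (fun x => decide (Odd x)))
      (t.countP (fun x => decide (Even x)) + 1 + (t.length + 1) % 2) := by
  simp [shiftedRank, ha, Nat.not_odd_iff_even.mpr ha]

theorem shiftedRank_cons_le_cons (a b : ℕ) (t : List ℕ) :
    shiftedRank (a :: t) ≤ shiftedRank (b :: t) + 1 := by
  rcases Nat.even_or_odd a with ha | ha <;> rcases Nat.even_or_odd b with hb | hb <;>
    simp only [shiftedRank_cons_of_even, shiftedRank_cons_of_odd, ha, hb] <;> omega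

theorem shiftedRank_cons_le_of_odd {a : ℕ} (ha : Odd a) (t : List ℕ) :
    shiftedRank (a :: t) ≤ shiftedRank t + 1 := by
  rw [shiftedRank_cons_of_odd ha, shiftedRank]
  omega

theorem shiftedRank_cons_cons_le_of_odd_add {a b : ℕ} (hab : Odd (a + b)) (t : List ℕ) :
    shiftedRank (a :: b :: t) ≤ shiftedRank t + 1 := by
  rw [Nat.odd_add] at hab
  rcases Nat.even_or_odd a with ha | ha <;> rcases Nat.even_or_odd b with hb | hb
  · exact absurd (hab.mpr hb) (Nat.not_odd_iff_even.mpr ha)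
  · simp [shiftedRank, ha, hb, Nat.not_odd_iff_even.mpr ha, Nat.not_even_iff_odd.mpr hb]; omega
  · simp [shiftedRank, ha, hb, Nat.not_even_iff_odd.mpr ha, Nat.not_odd_iff_even.mpr hb]; omega
  · exact absurd (hab.mp ha) (Nat.not_even_iff_odd.mpr hb)

theorem partAt_eq_getElem {l : List ℕ} {i : ℕ} (h : i - 1 < l.length) : partAt l i = l[i - 1] :=
  List.getD_eq_getElem l 0 h

theorem partAt_succ {l : List ℕ} {k : ℕ} (h : k < l.length) : partAt l (k + 1) = l[k] :=
  List.getD_eq_getElem l 0 h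

theorem partAt_eq_zero {l : List ℕ} {i : ℕ} (h : l.length ≤ i - 1) : partAt l i = 0 :=
  List.getD_eq_default l 0 h

theorem lt_length_of_partAt_pos {l : List ℕ} {i : ℕ} (h : 0 < partAt l i) : i - 1 < l.length := by
  by_contra hi
  rw [partAt_eq_zero (not_lt.mp hi)] at h
  exact h.false

theorem antitone_partAt {l : List ℕ} (hl : l.Pairwise (· > ·)) : Antitone (partAt l) := by
  intro a b hab
  by_cases hb : b - 1 < l.length
  · rw [partAt_eq_getElem hb, partAt_eq_getElem (by omega)]
    rcases (show a - 1 ≤ b - 1 by omega).lt_or_eq with h | h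
    · exact (List.pairwise_iff_getElem.mp hl _ _ _ _ h).le
    · simp only [h, le_refl]
  · rw [partAt_eq_zero (not_lt.mp hb)]
    exact Nat.zero_le _

theorem partAt_le_of_mem_take {l : List ℕ} (hl : l.Pairwise (· > ·)) {j x : ℕ}
    (hx : x ∈ l.take j) : partAt l j ≤ x := by
  obtain ⟨k, hk, rfl⟩ := List.mem_iff_getElem.mp hx
  rw [List.length_take] at hk
  rw [List.getElem_take, ← partAt_succ (by omega)]
  exact antitone_partAt hl (by omega)

theorem le_partAt_of_mem_drop {l : List ℕ} (hl : l.Pairwise (· > ·)) {j x : ℕ}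
    (hx : x ∈ l.drop j) : x ≤ partAt l (j + 1) := by
  obtain ⟨k, hk, rfl⟩ := List.mem_iff_getElem.mp hx
  rw [List.length_drop] at hk
  rw [List.getElem_drop, ← partAt_succ (by omega)]
  exact antitone_partAt hl (by omega)

theorem List.insertIdx_length_append {α : Type*} (A B : List α) (v : α) :
    (A ++ B).insertIdx A.length v = A ++ v :: B := by
  induction A with
  | nil => simp
  | cons a A ih => simp [List.insertIdx_succ_cons, ih]

theorem List.insertIdx_eraseIdx_eq_append {α : Type*} {l : List α} {i j : ℕ} (hij : i ≤ j)
    (hj : j < l.length) (v : α) :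
    (l.eraseIdx i).insertIdx j v = (l.take (j + 1)).eraseIdx i ++ v :: l.drop (j + 1) := by
  have hsplit : l.eraseIdx i = (l.take (j + 1)).eraseIdx i ++ l.drop (j + 1) := by
    conv_lhs => rw [← List.take_append_drop (j + 1) l]
    exact List.eraseIdx_append_of_lt_length (by simp; omega) _
  have hlen : ((l.take (j + 1)).eraseIdx i).length = j := by
    rw [List.length_eraseIdx_of_lt (by simp; omega), List.length_take]; omega
  rw [hsplit, ← List.insertIdx_length_append, hlen]

theorem pairwise_insertIdx_eraseIdx {l : List ℕ} (hl : l.Pairwise (· > ·)) {i j v : ℕ}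
    (hij : i - 1 ≤ j - 1) (hj : 1 ≤ j) (hjl : j - 1 < l.length)
    (hlow : partAt l (j + 1) < v) (hhigh : v < partAt l j) :
    ((l.eraseIdx (i - 1)).insertIdx (j - 1) v).Pairwise (· > ·) := by
  rw [List.insertIdx_eraseIdx_eq_append hij hjl, Nat.sub_add_cancel hj, List.pairwise_append,
    List.pairwise_cons]
  have hbelow : ∀ b ∈ l.drop j, b < v := fun b hb =>
    (le_partAt_of_mem_drop hl hb).trans_lt hlow
  refine ⟨hl.sublist ((List.eraseIdx_sublist _ _).trans (List.take_sublist _ _)),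
    ⟨hbelow, hl.sublist (List.drop_sublist _ _)⟩, fun a ha b hb => ?_⟩
  have hva : v < a :=
    hhigh.trans_le (partAt_le_of_mem_take hl ((List.eraseIdx_sublist _ _).subset ha))
  rcases List.mem_cons.mp hb with rfl | hb
  · exact hva
  · exact (hbelow b hb).trans hva

namespace IsStrictPartition

variable {n r : ℕ} {l : List ℕ}

theorem eq_nil (hl : IsStrictPartition 0 l) : l = [] :=
  List.eq_nil_iff_forall_not_mem.mpr fun x hx =>
    (hl.2.1 x hx).ne' (List.sum_eq_zero_iff.mp hl.2.2 x hx)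

theorem eraseIdx (hl : IsStrictPartition n l) {k : ℕ} (hk : k < l.length) :
    IsStrictPartition (n - l[k]) (l.eraseIdx k) := by
  have hsum := (List.getElem_cons_eraseIdx_perm hk).sum_eq
  rw [List.sum_cons, hl.2.2] at hsum
  exact ⟨hl.1.sublist (List.eraseIdx_sublist _ _),
    fun x hx => hl.2.1 x ((List.eraseIdx_sublist _ _).subset hx), by omega⟩

theorem insertIdx_eraseIdx_of_partAt_lt (hl : IsStrictPartition n l) {i j : ℕ}
    (hlow : partAt l (j + 1) < partAt l i - r) (hhigh : partAt l i - r < partAt l j) :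
    IsStrictPartition (n - r) ((l.eraseIdx (i - 1)).insertIdx (j - 1) (partAt l i - r)) ∧
      shiftedRank l ≤
        shiftedRank ((l.eraseIdx (i - 1)).insertIdx (j - 1) (partAt l i - r)) + 1 := by
  set v := partAt l i - r
  -- `partAt` is `0` past the end, so the two inequalities put `i` and `j` in range, with `i ≤ j`.
  have hik : i - 1 < l.length := lt_length_of_partAt_pos (by omega)
  have hjk : j - 1 < l.length := lt_length_of_partAt_pos (by omega)
  have hj : 1 ≤ j := by
    by_contra hj
    obtain rfl : j = 0 := by omega
    exact absurd (hlow.trans hhigh) (lt_irrefl _)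
  have hij : i - 1 ≤ j - 1 := by
    by_contra hij
    have := antitone_partAt hl.1 (show j + 1 ≤ i by omega)
    omega
  have hperm : ((l.eraseIdx (i - 1)).insertIdx (j - 1) v).Perm (v :: l.eraseIdx (i - 1)) :=
    List.perm_insertIdx _ _ (by rw [List.length_eraseIdx_of_lt hik]; omega)
  have hl_perm := List.getElem_cons_eraseIdx_perm hik
  have hpos : ∀ x ∈ (l.eraseIdx (i - 1)).insertIdx (j - 1) v, 0 < x := by
    intro x hx
    rcases List.mem_cons.mp (hperm.mem_iff.mp hx) with rfl | hx
    · omega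
    · exact hl.2.1 x ((List.eraseIdx_sublist _ _).subset hx)
  have hsum : ((l.eraseIdx (i - 1)).insertIdx (j - 1) v).sum = n - r := by
    have h₁ := hperm.sum_eq
    have h₂ := hl_perm.sum_eq
    rw [List.sum_cons] at h₁ h₂
    rw [← partAt_eq_getElem hik, hl.2.2] at h₂
    omega
  refine ⟨⟨pairwise_insertIdx_eraseIdx hl.1 hij hj hjk hlow hhigh, hpos, hsum⟩, ?_⟩
  rw [hperm.shiftedRank_eq, ← hl_perm.shiftedRank_eq]
  exact shiftedRank_cons_le_cons _ _ _

theorem eraseIdx_of_partAt_eq (hl : IsStrictPartition n l) (hr : Odd r) {i : ℕ}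
    (hi : partAt l i = r) :
    IsStrictPartition (n - r) (l.eraseIdx (i - 1)) ∧
      shiftedRank l ≤ shiftedRank (l.eraseIdx (i - 1)) + 1 := by
  have hik : i - 1 < l.length := lt_length_of_partAt_pos (hi ▸ hr.pos)
  rw [partAt_eq_getElem hik] at hi
  refine ⟨hi ▸ hl.eraseIdx hik, ?_⟩
  rw [← (List.getElem_cons_eraseIdx_perm hik).shiftedRank_eq, hi]
  exact shiftedRank_cons_le_of_odd hr _

theorem eraseIdx_eraseIdx_of_partAt_add (hl : IsStrictPartition n l) (hr : Odd r) {i j : ℕ}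
    (hi : 1 ≤ i) (hij : i < j) (hj : j ≤ l.length) (hsum : partAt l i + partAt l j = r) :
    IsStrictPartition (n - r) ((l.eraseIdx (j - 1)).eraseIdx (i - 1)) ∧
      shiftedRank l ≤ shiftedRank ((l.eraseIdx (j - 1)).eraseIdx (i - 1)) + 1 := by
  have hjk : j - 1 < l.length := by omega
  have hik : i - 1 < (l.eraseIdx (j - 1)).length := by
    rw [List.length_eraseIdx_of_lt hjk]; omega
  have hget : (l.eraseIdx (j - 1))[i - 1] = partAt l i := by
    rw [List.getElem_eraseIdx_of_lt _ (by omega), partAt_eq_getElem (by omega)]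
  rw [partAt_eq_getElem hjk] at hsum
  refine ⟨?_, ?_⟩
  · have := (hl.eraseIdx hjk).eraseIdx hik
    rwa [hget, Nat.sub_sub, add_comm, hsum] at this
  · rw [← (List.getElem_cons_eraseIdx_perm hjk).shiftedRank_eq,
      ← ((List.getElem_cons_eraseIdx_perm hik).cons _).shiftedRank_eq, hget]
    exact shiftedRank_cons_cons_le_of_odd_add (by rwa [add_comm, hsum]) _

end IsStrictPartition

theorem morrisSum_eq_zero (F : List ℕ → List ℕ → ℚ) {n r : ℕ} {l π' : List ℕ}
    (hl : IsStrictPartition n l) (hr : Odd r)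
    (hF : ∀ l', IsStrictPartition (n - r) l' → shiftedRank l ≤ shiftedRank l' + 1 → F l' π' = 0) :
    morrisSum F l r π' = 0 := by
  have hterm : ∀ {l'} (c : ℚ),
      IsStrictPartition (n - r) l' ∧ shiftedRank l ≤ shiftedRank l' + 1 → c * F l' π' = 0 :=
    fun c h => by rw [hF _ h.1 h.2, mul_zero]
  rw [morrisSum, Finset.sum_eq_zero fun i _ => Finset.sum_eq_zero fun j _ => ?plus,
    Finset.sum_eq_zero fun i _ => ?zero,
    Finset.sum_eq_zero fun i hi => Finset.sum_eq_zero fun j hj => ?minus, add_zero, add_zero]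
  case plus =>
    split_ifs with h
    exacts [hterm _ (hl.insertIdx_eraseIdx_of_partAt_lt h.1 h.2), rfl]
  case zero =>
    split_ifs with h
    exacts [hterm _ (hl.eraseIdx_of_partAt_eq hr h), rfl]
  case minus =>
    rw [Finset.mem_Icc] at hi hj
    dsimp only
    split_ifs with h
    exacts [hterm _ (hl.eraseIdx_eraseIdx_of_partAt_add hr hi.1 h.1 hj.2 h.2), rfl]

theorem morris_recurrence_vanishing_general (F : List ℕ → List ℕ → ℚ)
    (hrec : ∀ (n : ℕ) (l : List ℕ) (r : ℕ) (π' : List ℕ),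
      0 < n → IsStrictPartition n l →
      (r :: π').Pairwise (· ≥ ·) → (∀ x ∈ r :: π', Odd x) → (r :: π').sum = n →
      F l (r :: π') = morrisSum F l r π') :
    ∀ (n : ℕ) (l π : List ℕ), IsStrictPartition n l →
      π.Pairwise (· ≥ ·) → (∀ x ∈ π, Odd x) → π.sum = n →
      π.length < max (l.countP (fun x => decide (Odd x)))
          (l.countP (fun x => decide (Even x)) + l.length % 2) →
      F l π = 0 := by
  intro n l π hl hsort hodd hsum hlt
  change π.length < shiftedRank l at hlt
  induction π generalizing n l with
  | nil =>
    obtain rfl : l = [] := (hsum ▸ hl).eq_nil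
    exact absurd hlt (Nat.not_lt_zero _)
  | cons r π' ih =>
    have hr : Odd r := hodd r List.mem_cons_self
    have hn : r + π'.sum = n := by rwa [List.sum_cons] at hsum
    rw [hrec n l r π' (by have := hr.pos; omega) hl hsort hodd hsum]
    rw [List.length_cons] at hlt
    exact morrisSum_eq_zero F hl hr fun l' hl' hrank => ih (n - r) l' hl' hsort.of_cons
      (fun x hx => hodd x (List.mem_cons_of_mem r hx)) (by omega) (by omega)

/-- If `F` satisfies the Morris recurrence (with `r` the largest part of `π`, i.e. its head),
then `F(λ, π) = 0` whenever `ℓ(π) < srank(λ) = max(o, e + (ℓ(λ) mod 2))`. -/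
theorem morris_recurrence_vanishing (F : List ℕ → List ℕ → ℚ)
    (hbase : F [] [] = 1)
    (hrec : ∀ (n : ℕ) (l : List ℕ) (r : ℕ) (π' : List ℕ),
      0 < n → IsStrictPartition n l →
      (r :: π').Pairwise (· ≥ ·) → (∀ x ∈ r :: π', Odd x) → (r :: π').sum = n →
      F l (r :: π') = morrisSum F l r π') :
    ∀ (n : ℕ) (l π : List ℕ), IsStrictPartition n l →
      π.Pairwise (· ≥ ·) → (∀ x ∈ π, Odd x) → π.sum = n →
      π.length < max (l.countP (fun x => decide (Odd x)))
          (l.countP (fun x => decide (Even x)) + l.length % 2) →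
      F l π = 0 :=
  morris_recurrence_vanishing_general F hrec
end

section
/- Let λ be a strict partition with o odd parts and e even parts, and suppose o ≥ e. Let T* be a minimal bar tableau of shape λ in which no bar boundary occurs an even number of squares along any row. Then every bar of type 3 in T* consists of an entire even row paired with an entire odd row, there are exactly e bars of type 3, and each of the remaining o − e odd rows is filled entirely by a single label of its own; consequently T* has exactly o bars. -/
/-!
Compare `T` with the tableau whose rows are constant, the `i`-th even row sharing its label with
the `i`-th odd row and every remaining odd row getting a label of its own: it is a bar tableau
with at most `o` bars, so `T` has at most `o` bars. A label occupying two rows occurs an odd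
number of times in total, so it fills an even-length prefix of one of them; with no even bar
boundary that prefix is the whole row, which is then an even row. Hence at most `e` bars have
type 3. Counting pairs (label, row containing it) gives
`e + o ≤ ∑ rows, #labels in the row = #bars + #type-3 bars ≤ o + e`,
so equality holds throughout: every row is constant, there are `o` bars, `e` of them of type 3.
-/

open List

def constTableau (l : List ℕ) (g : ℕ → ℕ) : List (List ℕ) :=
  l.map fun p => replicate p (g p)

section ConstTableau

variable {l : List ℕ} {g : ℕ → ℕ}

lemma count_flatten_constTableau (v : ℕ) :
    (constTableau l g).flatten.count v = (l.filter fun p => g p = v).sum := by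
  induction l with
  | nil => rfl
  | cons p l ih =>
    simp only [constTableau] at ih
    by_cases h : g p = v <;> simp [constTableau, count_replicate, h, ih]

lemma exists_eq_of_mem_flatten_constTableau {v : ℕ} (hv : v ∈ (constTableau l g).flatten) :
    ∃ p ∈ l, g p = v := by
  obtain ⟨_, ⟨p, hp, rfl⟩, hvp⟩ := by simpa only [constTableau, mem_flatten, mem_map] using hv
  exact ⟨p, hp, (eq_of_mem_replicate hvp).symm⟩

lemma nonzero_truncated_lengths_constTableau_sublist (i : ℕ) :
    (((constTableau l g).map fun row => row.filter fun x => x ≤ i).map length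
      |>.filter fun k => k ≠ 0).Sublist l := by
  induction l with
  | nil => simp [constTableau]
  | cons p l ih =>
    simp only [constTableau, map_cons, filter_replicate, filter_cons] at ih ⊢
    split_ifs <;> simp_all

lemma isBarTableau_constTableau (hl : l.Nodup) (hg : ∀ p ∈ l, 0 < g p)
    (htwo : ∀ v, (l.filter fun p => g p = v).length ≤ 2)
    (hodd : ∀ p ∈ l, Odd (l.filter fun q => g q = g p).sum) :
    IsBarTableau l (constTableau l g) := by
  have hrow : ∀ row ∈ constTableau l g, ∃ p ∈ l, row = replicate p (g p) := by
    simp [constTableau, eq_comm]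
  refine ⟨by simp [constTableau, Function.comp_def], ?_, ?_, ?_, ?_, ?_, ?_⟩
  · intro row hr x hx
    obtain ⟨p, hp, rfl⟩ := hrow row hr
    exact (eq_of_mem_replicate hx) ▸ hg p hp
  · intro row hr
    obtain ⟨p, -, rfl⟩ := hrow row hr
    exact isChain_iff_pairwise.mpr (pairwise_replicate.mpr (.inr le_rfl))
  · intro v hv
    obtain ⟨p, hp, rfl⟩ := exists_eq_of_mem_flatten_constTableau hv
    exact count_flatten_constTableau (g p) ▸ hodd p hp
  · intro v
    refine le_trans ?_ (htwo v)
    rw [constTableau, countP_map, countP_eq_length_filter]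
    refine (monotone_filter_right _ fun p hp => ?_).length_le
    simpa [eq_comm] using (mem_replicate.mp (of_decide_eq_true hp)).2
  · intro v _ row hr hv
    obtain ⟨p, -, rfl⟩ := hrow row hr
    rw [mem_replicate] at hv
    rw [head?_replicate, if_neg hv.1, hv.2]
  · exact fun i => (nonzero_truncated_lengths_constTableau_sublist i).nodup hl

lemma numBars_constTableau_le {s : Finset ℕ} (hs : ∀ p ∈ l, g p ∈ s) :
    numBars (constTableau l g) ≤ s.card := by
  rw [numBars, ← card_toFinset]
  refine Finset.card_le_card fun v hv => ?_
  obtain ⟨p, hp, rfl⟩ := exists_eq_of_mem_flatten_constTableau (mem_toFinset.mp hv)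
  exact hs p hp

end ConstTableau

section ParityInjective

variable {s : Finset ℕ} (hs : ∀ x ∈ s, ∀ y ∈ s, (Even x ↔ Even y) → x = y)
include hs

lemma Finset.card_le_two_of_parity_injective : s.card ≤ 2 := by
  have hclass : ∀ (P : ℕ → Prop) [DecidablePred P], (∀ x y, P x → P y → (Even x ↔ Even y)) →
      (s.filter P).card ≤ 1 := fun P _ hP => Finset.card_le_one.mpr fun x hx y hy => by
    rw [Finset.mem_filter] at hx hy
    exact hs x hx.1 y hy.1 (hP x y hx.2 hy.2)
  have hE := hclass Even fun x y hx hy => iff_of_true hx hy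
  have hO := hclass (¬Even ·) fun x y hx hy => iff_of_false hx hy
  rw [← Finset.card_filter_add_card_filter_not Even]
  omega

lemma Finset.odd_sum_of_parity_injective {q : ℕ} (hq : q ∈ s) (hodd : Odd q) :
    Odd (∑ x ∈ s, x) := by
  have hq' : ¬Even q := Nat.not_even_iff_odd.mpr hodd
  have hsingle : s.filter (¬Even ·) = {q} := by
    refine Finset.eq_singleton_iff_unique_mem.mpr ⟨Finset.mem_filter.mpr ⟨hq, hq'⟩, ?_⟩
    intro x hx
    rw [Finset.mem_filter] at hx
    exact hs x hx.1 q hq (iff_of_false hx.2 hq')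
  have heven : Even (∑ x ∈ s.filter Even, x) :=
    Finset.even_sum _ fun x hx => (Finset.mem_filter.mp hx).2
  rw [← Finset.sum_filter_add_sum_filter_not s Even, hsingle, Finset.sum_singleton]
  exact heven.add_odd hodd

end ParityInjective

def sameParityParts (l : List ℕ) (p : ℕ) : List ℕ :=
  l.filter fun x => (Even x ↔ Even p)

/-- The `i`-th even part and the `i`-th odd part of `l` (counted from `0`, in list order) share
the label `i + 1`. -/
def pairingLabel (l : List ℕ) (p : ℕ) : ℕ :=
  (sameParityParts l p).idxOf p + 1

section PairingLabel

variable {l : List ℕ}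

lemma sameParityParts_of_even {p : ℕ} (hp : Even p) :
    sameParityParts l p = l.filter fun x => Even x := by
  simp [sameParityParts, hp]

lemma sameParityParts_of_odd {p : ℕ} (hp : Odd p) :
    sameParityParts l p = l.filter fun x => Odd x := by
  simp [sameParityParts, Nat.not_even_iff_odd.mpr hp]

lemma eq_of_pairingLabel_eq {p q : ℕ} (hp : p ∈ l) (hpq : Even p ↔ Even q)
    (h : pairingLabel l p = pairingLabel l q) : p = q := by
  have hclass : sameParityParts l q = sameParityParts l p := by simp [sameParityParts, hpq]
  rw [pairingLabel, pairingLabel, hclass, Nat.add_right_cancel_iff] at h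
  exact (idxOf_inj (mem_filter.mpr ⟨hp, by simp⟩)).mp h

lemma pairingLabel_le (hoe : l.countP (fun x => Even x) ≤ l.countP (fun x => Odd x))
    {p : ℕ} (hp : p ∈ l) : pairingLabel l p ≤ l.countP (fun x => Odd x) := by
  have hlt : (sameParityParts l p).idxOf p < (sameParityParts l p).length :=
    idxOf_lt_length_iff.mpr (mem_filter.mpr ⟨hp, by simp⟩)
  rcases Nat.even_or_odd p with he | ho
  · rw [sameParityParts_of_even he, ← countP_eq_length_filter] at hlt
    rw [pairingLabel, sameParityParts_of_even he]
    omega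
  · rw [sameParityParts_of_odd ho, ← countP_eq_length_filter] at hlt
    rw [pairingLabel, sameParityParts_of_odd ho]
    omega

lemma exists_odd_pairingLabel_eq (hl : l.Nodup)
    (hoe : l.countP (fun x => Even x) ≤ l.countP (fun x => Odd x)) {p : ℕ} (hp : p ∈ l) :
    ∃ q ∈ l, Odd q ∧ pairingLabel l q = pairingLabel l p := by
  rcases Nat.even_or_odd p with he | ho
  · set i := (l.filter fun x => Even x).idxOf p
    have hi : i < (l.filter fun x => Odd x).length := by
      have hpE : p ∈ l.filter fun x => Even x := mem_filter.mpr ⟨hp, by simpa using he⟩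
      have := idxOf_lt_length_iff.mpr hpE
      rw [← countP_eq_length_filter] at this ⊢
      omega
    obtain ⟨hq, hqodd⟩ := mem_filter.mp (getElem_mem hi)
    have hqodd : Odd (l.filter fun x => Odd x)[i] := by simpa using hqodd
    refine ⟨_, hq, hqodd, ?_⟩
    rw [pairingLabel, pairingLabel, sameParityParts_of_odd hqodd, sameParityParts_of_even he,
      (hl.filter _).idxOf_getElem]
  · exact ⟨p, hp, ho, rfl⟩

lemma length_filter_pairingLabel_le_two (hl : l.Nodup) (v : ℕ) :
    (l.filter fun p => pairingLabel l p = v).length ≤ 2 := by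
  rw [← toFinset_card_of_nodup (hl.filter _), toFinset_filter]
  refine Finset.card_le_two_of_parity_injective fun x hx y hy hxy => ?_
  simp only [Finset.mem_filter, mem_toFinset, decide_eq_true_eq] at hx hy
  exact eq_of_pairingLabel_eq hx.1 hxy (hx.2.trans hy.2.symm)

lemma odd_sum_filter_pairingLabel (hl : l.Nodup)
    (hoe : l.countP (fun x => Even x) ≤ l.countP (fun x => Odd x)) {p : ℕ} (hp : p ∈ l) :
    Odd (l.filter fun q => pairingLabel l q = pairingLabel l p).sum := by
  obtain ⟨q, hq, hqodd, hqp⟩ := exists_odd_pairingLabel_eq hl hoe hp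
  rw [← map_id (l.filter _), ← sum_toFinset id (hl.filter _), toFinset_filter]
  refine Finset.odd_sum_of_parity_injective (fun x hx y hy hxy => ?_) ?_ hqodd
  · simp only [Finset.mem_filter, mem_toFinset, decide_eq_true_eq] at hx hy
    exact eq_of_pairingLabel_eq hx.1 hxy (hx.2.trans hy.2.symm)
  · simpa using ⟨hq, hqp⟩

end PairingLabel

theorem exists_isBarTableau_numBars_le {l : List ℕ} (hl : l.Nodup)
    (hoe : l.countP (fun x => Even x) ≤ l.countP (fun x => Odd x)) :
    ∃ T, IsBarTableau l T ∧ numBars T ≤ l.countP (fun x => Odd x) := by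
  refine ⟨constTableau l (pairingLabel l), isBarTableau_constTableau hl
    (fun _ _ => Nat.succ_pos _) (length_filter_pairingLabel_le_two hl)
    (fun _ => odd_sum_filter_pairingLabel hl hoe), ?_⟩
  refine (numBars_constTableau_le (s := Finset.Icc 1 _)
    fun p hp => Finset.mem_Icc.mpr ⟨Nat.succ_pos _, pairingLabel_le hoe hp⟩).trans ?_
  simp

lemma exists_eq_replicate_append_of_pairwise {α : Type*} [PartialOrder α] {v : α} {t : List α}
    (h : (v :: t).Pairwise (· ≤ ·)) :
    ∃ k s, v :: t = replicate (k + 1) v ++ s ∧ ∀ x ∈ s, v < x := by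
  induction t with
  | nil => exact ⟨0, [], rfl, by simp⟩
  | cons w t ih =>
    obtain ⟨hvw, hw⟩ := pairwise_cons.mp h
    rcases eq_or_ne v w with rfl | hne
    · obtain ⟨k, s, hts, hs⟩ := ih hw
      exact ⟨k + 1, s, by rw [hts]; rfl, hs⟩
    · refine ⟨0, w :: t, rfl, fun x hx => ?_⟩
      have hvw' : v < w := (hvw w (mem_cons_self ..)).lt_of_ne hne
      rcases mem_cons.mp hx with rfl | hx
      · exact hvw'
      · exact hvw'.trans_le ((pairwise_cons.mp hw).1 x hx)

lemma forall_eq_of_even_count {row : List ℕ} {v : ℕ} (hsort : row.Pairwise (· ≤ ·))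
    (hhead : row.head? = some v) (hb : ¬HasEvenBoundary row) (hev : Even (row.count v)) :
    ∀ x ∈ row, x = v := by
  obtain ⟨t, rfl⟩ : ∃ t, row = v :: t := by
    cases row with
    | nil => simp at hhead
    | cons a t => exact ⟨t, by simpa using hhead⟩
  obtain ⟨k, s, hts, hs⟩ := exists_eq_replicate_append_of_pairwise hsort
  have hcount : (v :: t).count v = k + 1 := by
    rw [hts, count_append, count_replicate_self, count_eq_zero.mpr fun hv => (hs v hv).false]
  rw [hts] at hb ⊢
  cases s with
  | nil => simp
  | cons y s =>
    refine absurd ⟨k + 1, k.succ_pos, hcount ▸ hev, by simp, fun c hc => ?_⟩ hb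
    simp only [take_left' length_replicate, mem_replicate] at hc
    simpa [hc.2, getD_eq_getElem?_getD, getElem?_append_right] using hs y (mem_cons_self ..)

lemma List.Nodup.countP_eq_card_filter_toFinset {α : Type*} [DecidableEq α] {L : List α}
    (hL : L.Nodup) (p : α → Prop) [DecidablePred p] :
    L.countP (fun x => p x) = (L.toFinset.filter p).card := by
  rw [countP_eq_length_filter, ← toFinset_card_of_nodup (hL.filter _), toFinset_filter]
  simp

lemma List.countP_dedup_eq_card_filter_toFinset {α : Type*} [DecidableEq α] (L : List α)
    (p : α → Prop) [DecidablePred p] :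
    L.dedup.countP (fun x => p x) = (L.toFinset.filter p).card := by
  have hset : L.dedup.toFinset = L.toFinset := by
    ext
    simp
  rw [(nodup_dedup L).countP_eq_card_filter_toFinset, hset]

lemma List.count_flatten_eq_sum_filter {α : Type*} [DecidableEq α] {T : List (List α)}
    (hT : T.Nodup) (v : α) :
    T.flatten.count v = ∑ r ∈ T.toFinset.filter (v ∈ ·), r.count v := by
  rw [count_flatten, ← sum_toFinset _ hT, Finset.sum_filter_of_ne]
  exact fun r _ hr => count_pos_iff.mp (Nat.pos_of_ne_zero hr)

lemma List.sum_card_toFinset_eq_sum_countP {α : Type*} [DecidableEq α] {T : List (List α)}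
    (hT : T.Nodup) :
    ∑ r ∈ T.toFinset, r.toFinset.card = ∑ v ∈ T.flatten.toFinset, T.countP (fun r => v ∈ r) := by
  convert Finset.sum_card_bipartiteAbove_eq_sum_card_bipartiteBelow (fun r v => v ∈ r)
    (s := T.toFinset) (t := T.flatten.toFinset) using 3 with r hr v
  · ext v
    simpa [Finset.bipartiteAbove] using fun hv => ⟨r, mem_toFinset.mp hr, hv⟩
  · exact hT.countP_eq_card_filter_toFinset _

lemma Finset.sum_eq_card_add_card_filter_eq_two {α : Type*} {s : Finset α} {f : α → ℕ}
    (h : ∀ x ∈ s, f x = 1 ∨ f x = 2) :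
    ∑ x ∈ s, f x = s.card + (s.filter (f · = 2)).card := by
  rw [Finset.card_filter, Finset.card_eq_sum_ones, ← Finset.sum_add_distrib]
  refine Finset.sum_congr rfl fun x hx => ?_
  rcases h x hx with h | h <;> simp [h]

section BarTableau

variable {l : List ℕ} {T : List (List ℕ)}

lemma IsBarTableau.nodup (hT : IsBarTableau l T) (hl : l.Nodup) : T.Nodup :=
  Nodup.of_map length (hT.1 ▸ hl)

lemma IsBarTableau.ne_nil (hT : IsBarTableau l T) (hpos : ∀ x ∈ l, 0 < x) {row : List ℕ}
    (hrow : row ∈ T) : row ≠ [] := by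
  rintro rfl
  simpa using hpos _ (hT.1 ▸ mem_map_of_mem hrow : [].length ∈ l)

lemma IsBarTableau.countP_mem_le_two (hT : IsBarTableau l T) (v : ℕ) :
    T.countP (fun row => v ∈ row) ≤ 2 :=
  hT.2.2.2.2.1 v

lemma IsBarTableau.exists_full_even_row (hT : IsBarTableau l T) (hnd : T.Nodup)
    (hb : ∀ row ∈ T, ¬HasEvenBoundary row) {v : ℕ}
    (h2 : T.countP (fun row => v ∈ row) = 2) :
    ∃ r₁ ∈ T, ∃ r₂ ∈ T, r₁ ≠ r₂ ∧ v ∈ r₁ ∧ v ∈ r₂ ∧ (∀ x ∈ r₁, x = v) ∧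
      Even r₁.length ∧ Odd (r₂.count v) := by
  obtain ⟨-, -, hchain, hodd, -, hhead, -⟩ := hT
  have hhead := hhead v h2
  rw [hnd.countP_eq_card_filter_toFinset, Finset.card_eq_two] at h2
  obtain ⟨a, b, hab, hpair⟩ := h2
  have hmem : ∀ r ∈ ({a, b} : Finset (List ℕ)), r ∈ T ∧ v ∈ r := fun r hr => by
    simpa using (hpair ▸ hr : r ∈ T.toFinset.filter fun r => v ∈ r)
  have hsum : Odd (a.count v + b.count v) := by
    have hv : v ∈ T.flatten := mem_flatten.mpr ⟨a, hmem a (by simp)⟩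
    simpa [count_flatten_eq_sum_filter hnd, hpair, Finset.sum_pair hab] using hodd v hv
  obtain ⟨r₁, h₁, r₂, h₂, hne, heven, hodd₂⟩ : ∃ r₁ ∈ ({a, b} : Finset (List ℕ)),
      ∃ r₂ ∈ ({a, b} : Finset (List ℕ)), r₁ ≠ r₂ ∧ Even (r₁.count v) ∧ Odd (r₂.count v) := by
    rcases Nat.even_or_odd (a.count v) with ha | ha
    · exact ⟨a, by simp, b, by simp, hab, ha, (Nat.odd_add'.mp hsum).mpr ha⟩
    · exact ⟨b, by simp, a, by simp, hab.symm, (Nat.odd_add.mp hsum).mp ha, ha⟩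
  obtain ⟨hr₁, hv₁⟩ := hmem r₁ h₁
  obtain ⟨hr₂, hv₂⟩ := hmem r₂ h₂
  have hall := forall_eq_of_even_count (isChain_iff_pairwise.mp (hchain r₁ hr₁))
    (hhead r₁ hr₁ hv₁) (hb r₁ hr₁) heven
  rw [count_eq_length.mpr fun x hx => (hall x hx).symm] at heven
  exact ⟨r₁, hr₁, r₂, hr₂, hne, hv₁, hv₂, hall, heven, hodd₂⟩

lemma IsBarTableau.card_type3_le (hT : IsBarTableau l T) (hnd : T.Nodup)
    (hb : ∀ row ∈ T, ¬HasEvenBoundary row) :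
    (T.flatten.toFinset.filter fun v => T.countP (fun row => v ∈ row) = 2).card
      ≤ l.countP (fun x => Even x) := by
  have hsub : (T.flatten.toFinset.filter fun v => T.countP (fun row => v ∈ row) = 2)
      ⊆ ((T.filter fun r => Even r.length).map headI).toFinset := fun v hv => by
    obtain ⟨r, hr, -, -, -, hvr, -, hall, heven, -⟩ :=
      hT.exists_full_even_row hnd hb (Finset.mem_filter.mp hv).2
    refine mem_toFinset.mpr (mem_map.mpr ⟨r, mem_filter.mpr ⟨hr, by simpa using heven⟩, ?_⟩)
    obtain ⟨x, t, rfl⟩ := exists_cons_of_ne_nil (ne_nil_of_mem hvr)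
    exact hall x (mem_cons_self ..)
  calc _ ≤ _ := Finset.card_le_card hsub
    _ ≤ _ := toFinset_card_le _
    _ = l.countP (fun x => Even x) := by
      rw [length_map, ← countP_eq_length_filter, ← hT.1, countP_map]
      rfl

theorem IsBarTableau.eq_counts_of_minimal (hT : IsBarTableau l T) (hl : l.Nodup)
    (hpos : ∀ x ∈ l, 0 < x)
    (hoe : l.countP (fun x => Even x) ≤ l.countP (fun x => Odd x))
    (hmin : ∀ T' : List (List ℕ), IsBarTableau l T' → numBars T ≤ numBars T')
    (hb : ∀ row ∈ T, ¬HasEvenBoundary row) :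
    numBars T = l.countP (fun x => Odd x) ∧
    T.flatten.dedup.countP (fun v => T.countP (fun row => v ∈ row) = 2)
      = l.countP (fun x => Even x) ∧
    ∀ row ∈ T, ∀ x ∈ row, ∀ y ∈ row, x = y := by
  have hnd := hT.nodup hl
  have hrows : T.toFinset.card = l.countP (fun x => Even x) + l.countP (fun x => Odd x) := by
    rw [toFinset_card_of_nodup hnd, ← length_map, hT.1, length_eq_countP_add_countP (Even ·)]
    simp [Nat.not_even_iff_odd]
  have hbars : numBars T ≤ l.countP (fun x => Odd x) := by
    obtain ⟨T', hT', hbars'⟩ := exists_isBarTableau_numBars_le hl hoe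
    exact (hmin T' hT').trans hbars'
  have htype3 := hT.card_type3_le hnd hb
  have hcount : ∀ v ∈ T.flatten.toFinset, T.countP (fun row => v ∈ row) = 1 ∨
      T.countP (fun row => v ∈ row) = 2 := fun v hv => by
    obtain ⟨r, hr, hvr⟩ := mem_flatten.mp (mem_toFinset.mp hv)
    have := (countP_pos_iff (p := fun row => v ∈ row)).mpr ⟨r, hr, by simpa using hvr⟩
    have := hT.countP_mem_le_two v
    omega
  have hdouble := sum_card_toFinset_eq_sum_countP hnd
  have hbars_card : T.flatten.toFinset.card = numBars T := card_toFinset _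
  rw [Finset.sum_eq_card_add_card_filter_eq_two hcount, hbars_card] at hdouble
  have hlabels : ∀ r ∈ T.toFinset, 1 ≤ r.toFinset.card := fun r hr =>
    Finset.card_pos.mpr ((toFinset_nonempty_iff r).mpr (hT.ne_nil hpos (mem_toFinset.mp hr)))
  have hlow := Finset.sum_le_sum hlabels
  rw [← Finset.card_eq_sum_ones] at hlow
  refine ⟨by omega, by rw [countP_dedup_eq_card_filter_toFinset]; omega, fun r hr => ?_⟩
  have hone := (Finset.sum_eq_sum_iff_of_le hlabels).mp
    (by rw [← Finset.card_eq_sum_ones]; omega) r (mem_toFinset.mpr hr)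
  simpa using Finset.card_le_one.mp hone.ge

end BarTableau

/-- Suppose `λ` has at least as many odd parts `o` as even parts `e`, and `T` is a minimal
bar tableau of shape `λ` with no even bar boundaries.  Then: (a) every bar of type 3 (a
label occurring in two rows) consists of an entire even row together with an entire odd
row; (b) there are exactly `e` bars of type 3; (c) every odd row not in a type-3 bar is
filled entirely by a single label occurring in no other row; and (d) `T` has exactly `o`
bars. -/
theorem minimal_structure_of_odd_ge_even (n : ℕ) (l : List ℕ) (T : List (List ℕ))
    (hl : IsStrictPartition n l)
    (hoe : l.countP (fun x => decide (Even x)) ≤ l.countP (fun x => decide (Odd x)))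
    (hT : IsBarTableau l T)
    (hmin : ∀ T' : List (List ℕ), IsBarTableau l T' → numBars T ≤ numBars T')
    (hb : ∀ row ∈ T, ¬ HasEvenBoundary row) :
    (∀ v : ℕ, T.countP (fun row => decide (v ∈ row)) = 2 →
      ∃ r₁ ∈ T, ∃ r₂ ∈ T, r₁ ≠ r₂ ∧ v ∈ r₁ ∧ v ∈ r₂ ∧
        (∀ x ∈ r₁, x = v) ∧ (∀ x ∈ r₂, x = v) ∧
        Even r₁.length ∧ Odd r₂.length) ∧
    (T.flatten.dedup.countP
        (fun v => decide (T.countP (fun row => decide (v ∈ row)) = 2))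
      = l.countP (fun x => decide (Even x))) ∧
    (∀ row ∈ T, Odd row.length →
      ¬ (∃ v ∈ row, T.countP (fun r => decide (v ∈ r)) = 2) →
      ∃ v : ℕ, (∀ x ∈ row, x = v) ∧ ∀ row' ∈ T, v ∈ row' → row' = row) ∧
    numBars T = l.countP (fun x => decide (Odd x)) := by
  have hnd := hT.nodup hl.1.nodup
  obtain ⟨hbars, htype3, hconst⟩ := hT.eq_counts_of_minimal hl.1.nodup hl.2.1 hoe hmin hb
  refine ⟨fun v hv => ?_, htype3, fun row hrow hodd htype3_free => ?_, hbars⟩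
  · obtain ⟨r₁, hr₁, r₂, hr₂, hne, hv₁, hv₂, hall₁, heven, hodd⟩ :=
      hT.exists_full_even_row hnd hb hv
    have hall₂ : ∀ x ∈ r₂, x = v := fun x hx => hconst r₂ hr₂ x hx v hv₂
    rw [count_eq_length.mpr fun x hx => (hall₂ x hx).symm] at hodd
    exact ⟨r₁, hr₁, r₂, hr₂, hne, hv₁, hv₂, hall₁, hall₂, heven, hodd⟩
  · obtain ⟨v, hv⟩ := exists_mem_of_ne_nil row (ne_nil_of_length_pos hodd.pos)
    refine ⟨v, fun x hx => hconst row hrow x hx v hv, fun row' hrow' hv' => ?_⟩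
    by_contra hne
    have htwo : 2 ≤ T.countP (fun r => v ∈ r) := by
      rw [hnd.countP_eq_card_filter_toFinset]
      exact Finset.one_lt_card.mpr
        ⟨row', by simpa using ⟨hrow', hv'⟩, row, by simpa using ⟨hrow, hv⟩, hne⟩
    exact htype3_free ⟨v, hv, le_antisymm (hT.countP_mem_le_two v) htwo⟩
end
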